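/- Let σ ∈ [0,1) be fixed and let b₀ ∈ ((1−σ)/(2−σ), 1/2). Then there exists a₁ > 0 such that for all a ≥ a₁ and all b ∈ [b₀, 1−b₀], the map f_{a,b,σ} : (0,1) → (0,1) has an attracting periodic orbit {p, q} of period 2, and for every x ∈ (0,1) either the iterates f_{a,b,σ}^{2n}(x) converge to p or to q, or there exists n ∈ ℕ with f_{a,b,σ}ⁿ(x) = x̄ (the unique fixed point of f_{a,b,σ} in (0,1)); moreover the set of points x ∈ (0,1) whose trajectory eventually equals x̄ is countable. -/

import Mathlib

open Real Filter Set

/-- The EWA dynamics map `f_{a,b,σ}`. -/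
noncomputable def f (a b σ x : ℝ) : ℝ :=
  x ^ (1 - σ) / (x ^ (1 - σ) + (1 - x) ^ (1 - σ) * Real.exp (a * (x - b)))

/-- A fixed point `x` of `g` is attracting if some open neighborhood of `x` is
attracted to `x` under iteration of `g`. -/
def IsAttractingFixedPt (g : ℝ → ℝ) (x : ℝ) : Prop :=
  g x = x ∧ ∃ U : Set ℝ, IsOpen U ∧ x ∈ U ∧
    ∀ y ∈ U, Filter.Tendsto (fun n => g^[n] y) Filter.atTop (nhds x)

namespace EWAProof

/-- Abstract form of the map with exponent `s = 1 - σ`. -/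
noncomputable def F (s a b x : ℝ) : ℝ :=
  x ^ s / (x ^ s + (1 - x) ^ s * Real.exp (a * (x - b)))

variable {s a b x y : ℝ}

lemma E_pos (hx : x ∈ Ioo (0:ℝ) 1) : 0 < (1 - x) ^ s * Real.exp (a * (x - b)) := by
  have : (0:ℝ) < (1 - x) ^ s := Real.rpow_pos_of_pos (by linarith [hx.2]) s
  positivity

lemma denom_pos (hx : x ∈ Ioo (0:ℝ) 1) :
    0 < x ^ s + (1 - x) ^ s * Real.exp (a * (x - b)) := by
  have h1 : (0:ℝ) < x ^ s := Real.rpow_pos_of_pos hx.1 s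
  linarith [E_pos (s := s) (a := a) (b := b) hx]

lemma F_pos (hx : x ∈ Ioo (0:ℝ) 1) : 0 < F s a b x :=
  div_pos (Real.rpow_pos_of_pos hx.1 s) (denom_pos hx)

lemma one_sub_F (hx : x ∈ Ioo (0:ℝ) 1) :
    1 - F s a b x
      = (1 - x) ^ s * Real.exp (a * (x - b)) /
        (x ^ s + (1 - x) ^ s * Real.exp (a * (x - b))) := by
  have hd := denom_pos (s := s) (a := a) (b := b) hx
  rw [F, eq_div_iff hd.ne', sub_mul, div_mul_cancel₀ _ hd.ne']; ring

lemma F_lt_one (hx : x ∈ Ioo (0:ℝ) 1) : F s a b x < 1 := by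
  have hd := denom_pos (s := s) (a := a) (b := b) hx
  have h2 := E_pos (s := s) (a := a) (b := b) hx
  rw [F, div_lt_one hd]
  linarith

lemma F_mem (hx : x ∈ Ioo (0:ℝ) 1) : F s a b x ∈ Ioo (0:ℝ) 1 :=
  ⟨F_pos hx, F_lt_one hx⟩

/-- Upper bound `F ≤ (1-x)^(-s) e^{-a(x-b)}` valid for `0 ≤ s`. -/
lemma F_le (hs : 0 ≤ s) (hx : x ∈ Ioo (0:ℝ) 1) :
    F s a b x ≤ (1 - x) ^ (-s) * Real.exp (-(a * (x - b))) := by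
  have h1x : (0:ℝ) < 1 - x := by linarith [hx.2]
  have hE := E_pos (s := s) (a := a) (b := b) hx
  have hd := denom_pos (s := s) (a := a) (b := b) hx
  have hA1 : x ^ s ≤ 1 := Real.rpow_le_one hx.1.le hx.2.le hs
  have hA : (0:ℝ) < x ^ s := Real.rpow_pos_of_pos hx.1 s
  have key : F s a b x ≤ 1 / ((1 - x) ^ s * Real.exp (a * (x - b))) := by
    rw [F, div_le_div_iff₀ hd hE]
    nlinarith
  calc F s a b x ≤ 1 / ((1 - x) ^ s * Real.exp (a * (x - b))) := key
    _ = (1 - x) ^ (-s) * Real.exp (-(a * (x - b))) := by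
        rw [Real.rpow_neg h1x.le, Real.exp_neg, one_div, mul_inv]

/-- Upper bound `1 - F ≤ x^(-s) e^{a(x-b)}` valid for `0 ≤ s`. -/
lemma one_sub_F_le (hs : 0 ≤ s) (hx : x ∈ Ioo (0:ℝ) 1) :
    1 - F s a b x ≤ x ^ (-s) * Real.exp (a * (x - b)) := by
  have h1x : (0:ℝ) < 1 - x := by linarith [hx.2]
  have hE := E_pos (s := s) (a := a) (b := b) hx
  have hd := denom_pos (s := s) (a := a) (b := b) hx
  have hB1 : (1 - x) ^ s ≤ 1 := Real.rpow_le_one h1x.le (by linarith [hx.1]) hs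
  have hA : (0:ℝ) < x ^ s := Real.rpow_pos_of_pos hx.1 s
  have hexp : (0:ℝ) < Real.exp (a * (x - b)) := Real.exp_pos _
  have key : 1 - F s a b x ≤ Real.exp (a * (x - b)) / x ^ s := by
    rw [one_sub_F hx, div_le_div_iff₀ hd hA]
    have h1 : (1 - x) ^ s * (Real.exp (a * (x - b)) * x ^ s)
        ≤ 1 * (Real.exp (a * (x - b)) * x ^ s) :=
      mul_le_mul_of_nonneg_right hB1 (by positivity)
    nlinarith [mul_pos hexp hE]
  calc 1 - F s a b x ≤ Real.exp (a * (x - b)) / x ^ s := key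
    _ = x ^ (-s) * Real.exp (a * (x - b)) := by
        rw [Real.rpow_neg hx.1.le, div_eq_mul_inv, mul_comm]

/-- Lower bound `F ≥ x^s / (1 + e^{a(x-b)})` valid for `0 ≤ s`. -/
lemma F_ge (hs : 0 ≤ s) (hx : x ∈ Ioo (0:ℝ) 1) :
    x ^ s / (1 + Real.exp (a * (x - b))) ≤ F s a b x := by
  have h1x : (0:ℝ) < 1 - x := by linarith [hx.2]
  have hB1 : (1 - x) ^ s ≤ 1 := Real.rpow_le_one h1x.le (by linarith [hx.1]) hs
  have hA1 : x ^ s ≤ 1 := Real.rpow_le_one hx.1.le hx.2.le hs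
  have hexp : (0:ℝ) < Real.exp (a * (x - b)) := Real.exp_pos _
  apply div_le_div_of_nonneg_left (Real.rpow_pos_of_pos hx.1 s).le (denom_pos hx)
  nlinarith

/-- The symmetry `F s a b (1-x) = 1 - F s a (1-b) x`. -/
lemma F_symm (hx : x ∈ Ioo (0:ℝ) 1) :
    F s a b (1 - x) = 1 - F s a (1 - b) x := by
  have hx' : (1 - x) ∈ Ioo (0:ℝ) 1 := ⟨by linarith [hx.2], by linarith [hx.1]⟩
  rw [one_sub_F hx]
  have hd := denom_pos (s := s) (a := a) (b := 1 - b) hx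
  have hd' := denom_pos (s := s) (a := a) (b := b) hx'
  have hprod : Real.exp (a * (1 - x - b)) * Real.exp (a * (x - (1 - b))) = 1 := by
    rw [← Real.exp_add]; ring_nf; exact Real.exp_zero
  rw [F]
  simp only [sub_sub_cancel]
  rw [div_eq_div_iff (by simpa [sub_sub_cancel] using hd'.ne') hd.ne']
  linear_combination (-((1 - x) ^ s * x ^ s)) * hprod


lemma hasDerivAt_F (hx : x ∈ Ioo (0:ℝ) 1) :
    HasDerivAt (F s a b)
      (F s a b x * (1 - F s a b x) * (s / (x * (1 - x)) - a)) x := by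
  have hx0 : x ≠ 0 := hx.1.ne'
  have h1x : (0:ℝ) < 1 - x := by linarith [hx.2]
  have h1x0 : (1:ℝ) - x ≠ 0 := h1x.ne'
  have hA : HasDerivAt (fun t : ℝ => t ^ s) (s * x ^ (s - 1)) x :=
    Real.hasDerivAt_rpow_const (Or.inl hx0)
  have hB : HasDerivAt (fun t : ℝ => (1 - t) ^ s) (s * (1 - x) ^ (s - 1) * (-1)) x := by
    exact (Real.hasDerivAt_rpow_const (p := s) (Or.inl h1x0)).comp x
      ((hasDerivAt_id x).const_sub 1)
  have hEx : HasDerivAt (fun t : ℝ => Real.exp (a * (t - b)))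
      (Real.exp (a * (x - b)) * (a * 1)) x := by
    exact (((hasDerivAt_id x).sub_const b).const_mul a).exp
  have hBE := hB.mul hEx
  have hden := hA.add hBE
  have hD : x ^ s + (1 - x) ^ s * Real.exp (a * (x - b)) ≠ 0 := by
    have h1 : (0:ℝ) < x ^ s := Real.rpow_pos_of_pos hx.1 s
    have h2 : (0:ℝ) < (1 - x) ^ s := Real.rpow_pos_of_pos h1x s
    positivity
  have hF := hA.div hden hD
  refine HasDerivAt.congr_deriv (f := F s a b) hF ?_
  simp only [Pi.add_apply, Pi.mul_apply]
  have hxs : x ^ (s - 1) = x ^ s / x := Real.rpow_sub_one hx0 s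
  have h1xs : (1 - x) ^ (s - 1) = (1 - x) ^ s / (1 - x) := Real.rpow_sub_one h1x0 s
  have h1F : 1 - F s a b x
      = (1 - x) ^ s * Real.exp (a * (x - b)) /
        (x ^ s + (1 - x) ^ s * Real.exp (a * (x - b))) := by
    rw [F, eq_div_iff hD, sub_mul, div_mul_cancel₀ _ hD]; ring
  rw [h1F, hxs, h1xs, F]
  field_simp
  ring

/-- The left critical point. -/
noncomputable def cc (s a : ℝ) : ℝ := (1 - Real.sqrt (1 - 4 * s / a)) / 2

section C
variable (hs : 0 < s) (hs1 : s < 1) (ha : 8 ≤ a)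
include hs hs1 ha

lemma ha0 : (0:ℝ) < a := lt_of_lt_of_le (by norm_num) ha

lemma arg_mem : 1 - 4 * s / a ∈ Icc (1/2 : ℝ) 1 := by
  have ha0 : (0:ℝ) < a := lt_of_lt_of_le (by norm_num) ha
  constructor
  · have : 4 * s / a ≤ 1/2 := by
      rw [div_le_iff₀ ha0]; nlinarith
    linarith
  · have : 0 < 4 * s / a := by positivity
    linarith

lemma cc_pos : 0 < cc s a := by
  have h := arg_mem hs hs1 ha
  have : Real.sqrt (1 - 4 * s / a) < 1 := by
    have ha0 : (0:ℝ) < a := lt_of_lt_of_le (by norm_num) ha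
    have h2 : 0 < 4 * s / a := by positivity
    have h1 : Real.sqrt (1 - 4 * s / a) < Real.sqrt 1 :=
      Real.sqrt_lt_sqrt (by linarith [h.1]) (by linarith)
    rwa [Real.sqrt_one] at h1
  unfold cc; linarith

lemma cc_le : cc s a ≤ 1/4 := by
  have h := arg_mem hs hs1 ha
  have : (1/2 : ℝ) ≤ Real.sqrt (1 - 4 * s / a) := by
    have h1 : Real.sqrt (1/4) ≤ Real.sqrt (1 - 4 * s / a) :=
      Real.sqrt_le_sqrt (by linarith [h.1])
    rwa [show (1/4 : ℝ) = (1/2)^2 by norm_num, Real.sqrt_sq (by norm_num : (0:ℝ) ≤ 1/2)] at h1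
  unfold cc; linarith

lemma cc_mul : cc s a * (1 - cc s a) = s / a := by
  have h := arg_mem hs hs1 ha
  have hsq : Real.sqrt (1 - 4 * s / a) ^ 2 = 1 - 4 * s / a :=
    Real.sq_sqrt (by linarith [h.1])
  unfold cc; linear_combination (-(1:ℝ)/4) * hsq

lemma cc_ge : s / a ≤ cc s a := by
  have h := cc_mul hs hs1 ha
  have h2 := cc_pos hs hs1 ha
  nlinarith

lemma cc_le' : cc s a ≤ 2 * (s / a) := by
  have h := cc_mul hs hs1 ha
  have h2 := cc_le hs hs1 ha
  have h3 := cc_pos hs hs1 ha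
  have h4 : cc s a * (1/2) ≤ cc s a * (1 - cc s a) := by nlinarith
  rw [h] at h4
  linarith

/-- The key sign identity. -/
lemma sign_identity (hx : x ∈ Ioo (0:ℝ) 1) :
    s / (x * (1 - x)) - a
      = a * ((x - cc s a) * (x - (1 - cc s a))) / (x * (1 - x)) := by
  have ha0 : (0:ℝ) < a := lt_of_lt_of_le (by norm_num) ha
  have hm := cc_mul hs hs1 ha
  have hx0 : x ≠ 0 := hx.1.ne'
  have h1x : (1:ℝ) - x ≠ 0 := by have := hx.2; intro h; apply hx.2.ne; linarith
  have ha0' : a ≠ 0 := ha0.ne'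
  rw [eq_div_iff ha0'] at hm
  field_simp
  linear_combination -hm

omit hs hs1 ha in
lemma deriv_F (hx : x ∈ Ioo (0:ℝ) 1) :
    deriv (F s a b) x = F s a b x * (1 - F s a b x) * (s / (x * (1 - x)) - a) :=
  (hasDerivAt_F hx).deriv

omit hs hs1 ha in
lemma contOn (hsub : ∀ y ∈ (U : Set ℝ), y ∈ Ioo (0:ℝ) 1) : ContinuousOn (F s a b) U :=
  fun y hy => ((hasDerivAt_F (hsub y hy)).continuousAt).continuousWithinAt

lemma strictMonoOn_left : StrictMonoOn (F s a b) (Ioc 0 (cc s a)) := by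
  have hc := cc_pos hs hs1 ha
  have hc4 := cc_le hs hs1 ha
  have hsub : ∀ y ∈ Ioc (0:ℝ) (cc s a), y ∈ Ioo (0:ℝ) 1 :=
    fun y hy => ⟨hy.1, by linarith [hy.2]⟩
  apply strictMonoOn_of_deriv_pos (convex_Ioc _ _) (contOn hsub)
  intro y hy
  rw [interior_Ioc] at hy
  have hy' : y ∈ Ioo (0:ℝ) 1 := ⟨hy.1, by linarith [hy.2]⟩
  rw [deriv_F hy', sign_identity hs hs1 ha hy']
  have h1 := F_pos (s := s) (a := a) (b := b) hy'
  have h2 := F_lt_one (s := s) (a := a) (b := b) hy'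
  have ha0 : (0:ℝ) < a := lt_of_lt_of_le (by norm_num) ha
  have hnum : 0 < (y - cc s a) * (y - (1 - cc s a)) := by nlinarith [hy.1, hy.2]
  have hden : 0 < y * (1 - y) := by nlinarith [hy'.1, hy'.2]
  exact mul_pos (mul_pos h1 (by linarith)) (div_pos (mul_pos ha0 hnum) hden)

lemma strictAntiOn_mid : StrictAntiOn (F s a b) (Icc (cc s a) (1 - cc s a)) := by
  have hc := cc_pos hs hs1 ha
  have hc4 := cc_le hs hs1 ha
  have hsub : ∀ y ∈ Icc (cc s a) (1 - cc s a), y ∈ Ioo (0:ℝ) 1 :=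
    fun y hy => ⟨lt_of_lt_of_le hc hy.1, by linarith [hy.2]⟩
  apply strictAntiOn_of_deriv_neg (convex_Icc _ _) (contOn hsub)
  intro y hy
  rw [interior_Icc] at hy
  have hy' : y ∈ Ioo (0:ℝ) 1 := ⟨by linarith [hy.1], by linarith [hy.2]⟩
  rw [deriv_F hy', sign_identity hs hs1 ha hy']
  have h1 := F_pos (s := s) (a := a) (b := b) hy'
  have h2 := F_lt_one (s := s) (a := a) (b := b) hy'
  have ha0 : (0:ℝ) < a := lt_of_lt_of_le (by norm_num) ha
  have hnum : (y - cc s a) * (y - (1 - cc s a)) < 0 := by nlinarith [hy.1, hy.2]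
  have hden : 0 < y * (1 - y) := by nlinarith [hy'.1, hy'.2]
  have : a * ((y - cc s a) * (y - (1 - cc s a))) / (y * (1 - y)) < 0 := by
    apply div_neg_of_neg_of_pos _ hden
    nlinarith
  nlinarith [mul_pos h1 (by linarith : (0:ℝ) < 1 - F s a b y)]

lemma strictMonoOn_right : StrictMonoOn (F s a b) (Ico (1 - cc s a) 1) := by
  have hc := cc_pos hs hs1 ha
  have hc4 := cc_le hs hs1 ha
  have hsub : ∀ y ∈ Ico (1 - cc s a) 1, y ∈ Ioo (0:ℝ) 1 :=
    fun y hy => ⟨by linarith [hy.1], hy.2⟩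
  apply strictMonoOn_of_deriv_pos (convex_Ico _ _) (contOn hsub)
  intro y hy
  rw [interior_Ico] at hy
  have hy' : y ∈ Ioo (0:ℝ) 1 := ⟨by linarith [hy.1], hy.2⟩
  rw [deriv_F hy', sign_identity hs hs1 ha hy']
  have h1 := F_pos (s := s) (a := a) (b := b) hy'
  have h2 := F_lt_one (s := s) (a := a) (b := b) hy'
  have ha0 : (0:ℝ) < a := lt_of_lt_of_le (by norm_num) ha
  have hnum : 0 < (y - cc s a) * (y - (1 - cc s a)) := by nlinarith [hy.1, hy.2]
  have hden : 0 < y * (1 - y) := by nlinarith [hy'.1, hy'.2]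
  exact mul_pos (mul_pos h1 (by linarith)) (div_pos (mul_pos ha0 hnum) hden)

end C

/-! ### Setup and quantitative estimates -/

/-- The uniform margin `ρ`. -/
def rr (s b₀ : ℝ) : ℝ := b₀ * (1 + s) - s

/-- The deep-region scale `ω`. -/
noncomputable def ww (s b₀ : ℝ) : ℝ := min (rr s b₀) b₀ / 8

/-- The minimum value `m = F(d)`. -/
noncomputable def mm (s a b : ℝ) : ℝ := F s a b (1 - cc s a)

/-- The maximum value `M = F(c)`. -/
noncomputable def MM (s a b : ℝ) : ℝ := F s a b (cc s a)

/-- All standing hypotheses: parameter ranges plus largeness of `a`. -/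
structure Setup (s b₀ a b : ℝ) : Prop where
  hs : 0 < s
  hs1 : s < 1
  hρ : 0 < b₀ * (1 + s) - s
  hb₀2 : b₀ < 1/2
  hbl : b₀ ≤ b
  hbr : b ≤ 1 - b₀
  ha8 : 8 ≤ a
  hF2 : 2 * (s / a) ≤ b₀ / 4
  hF3 : Real.exp (-(a * ww s b₀)) ≤ s / (2 * a)
  hF4 : a * Real.exp (-(a * ww s b₀)) ≤ (1 - s) / 4
  hF5 : a / s * Real.exp 2 * Real.exp (-(a * b₀)) ≤ Real.exp (-(a * (b₀ / 2)))
  hF6a : Real.exp (-(a * (b₀ / 2))) ≤ b₀ / 4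
  hF6b : Real.exp (-(a * (b₀ / 2)) * (1 - s)) ≤ 1 / 4
  hF7 : 4 ≤ a * rr s b₀
  hF8 : Real.exp (-(a * ww s b₀)) ≤ (1 - s) / 8
  hF9 : 16 / b₀ ^ 2 ≤ a
  hF10 : 2 / b₀ * Real.exp (-(a * (b₀ / 2))) ≤ b₀ / 2

/-- `x^(-s) ≤ e^(sT)` whenever `e^(-T) ≤ x`. -/
lemma rpow_neg_le_exp {x T s : ℝ} (hx : 0 < x) (hs : 0 ≤ s)
    (hT : Real.exp (-T) ≤ x) : x ^ (-s) ≤ Real.exp (s * T) := by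
  have h1 : x ^ (-s) = (x⁻¹) ^ s := by
    rw [Real.inv_rpow hx.le, Real.rpow_neg hx.le]
  have h2 : x⁻¹ ≤ Real.exp T := by
    rw [inv_le_comm₀ hx (Real.exp_pos T), ← Real.exp_neg T]
    exact hT
  calc x ^ (-s) = (x⁻¹) ^ s := h1
    _ ≤ (Real.exp T) ^ s := Real.rpow_le_rpow (by positivity) h2 hs
    _ = Real.exp (T * s) := (Real.exp_mul T s).symm
    _ = Real.exp (s * T) := by rw [mul_comm]

lemma exp_two_ge_four : (4:ℝ) ≤ Real.exp 2 := by
  have h := Real.exp_one_gt_d9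
  have : Real.exp 2 = Real.exp 1 * Real.exp 1 := by
    rw [← Real.exp_add]; norm_num
  nlinarith [Real.exp_pos 1]

namespace Setup

variable {s b₀ a b x y : ℝ} (h : Setup s b₀ a b)
include h

lemma hb₀0 : 0 < b₀ := by nlinarith [h.hρ, h.hs, h.hs1]
lemma hb₀1 : b₀ < 1 := by linarith [h.hb₀2]
lemma hbpos : 0 < b := lt_of_lt_of_le h.hb₀0 h.hbl
lemma hblt1 : b < 1 := by linarith [h.hbr, h.hb₀0]
lemma ha0 : (0:ℝ) < a := by linarith [h.ha8]
lemma hθ1 : rr s b₀ ≤ 1 - b * (1 + s) := by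
  have := h.hbr; unfold rr; nlinarith [h.hs]
lemma hθ2 : rr s b₀ ≤ b * (1 + s) - s := by
  have := h.hbl; unfold rr; nlinarith [h.hs]
lemma hw_pos : 0 < ww s b₀ := by
  have h1 := h.hρ; have h2 := h.hb₀0; unfold ww rr
  have : 0 < min (b₀ * (1 + s) - s) b₀ := lt_min h1 h2
  linarith
lemma hw_le_b₀ : ww s b₀ ≤ b₀ / 8 := by
  unfold ww; have : min (rr s b₀) b₀ ≤ b₀ := min_le_right _ _; linarith
lemma hw_le_ρ : ww s b₀ ≤ rr s b₀ / 8 := by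
  unfold ww; have : min (rr s b₀) b₀ ≤ rr s b₀ := min_le_left _ _; linarith

lemma symm : Setup s b₀ a (1 - b) :=
  { h with hbl := by linarith [h.hbr], hbr := by linarith [h.hbl] }

/-- Abbreviation facts about `W = exp(-(a ω))`. -/
lemma W_pos : 0 < Real.exp (-(a * ww s b₀)) := Real.exp_pos _
lemma aW_le : a * Real.exp (-(a * ww s b₀)) ≤ 1 := by
  have := h.hF4; have := h.hs; linarith
lemma W_lt_c : Real.exp (-(a * ww s b₀)) < cc s a := by
  have h1 := h.hF3
  have h2 := cc_ge h.hs h.hs1 h.ha8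
  have ha0 := h.ha0
  have : s / (2 * a) < s / a := by
    apply div_lt_div_of_pos_left h.hs ha0; linarith
  linarith
lemma W_le_b₀ : Real.exp (-(a * ww s b₀)) ≤ b₀ / 4 := by
  have h1 := h.hF3
  have h2 := h.hF2
  have ha0 := h.ha0
  have heq : s / (2 * a) = s / a / 2 := by
    rw [div_div, mul_comm]
  have h0 : 0 ≤ s / a := (div_pos h.hs ha0).le
  linarith [heq ▸ h1]
lemma W_lt_half : Real.exp (-(a * ww s b₀)) < 1/2 := by
  have := h.W_le_b₀; have := h.hb₀2; linarith

lemma c_le_b₀ : cc s a ≤ b₀ / 4 := by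
  have := cc_le' h.hs h.hs1 h.ha8; have := h.hF2; linarith
lemma c_mem : cc s a ∈ Ioo (0:ℝ) 1 := by
  have h1 := cc_pos h.hs h.hs1 h.ha8
  have h2 := cc_le h.hs h.hs1 h.ha8
  exact ⟨h1, by linarith⟩
lemma d_mem : 1 - cc s a ∈ Ioo (0:ℝ) 1 := by
  have := h.c_mem; exact ⟨by linarith [this.2], by linarith [this.1]⟩

lemma m_pos : 0 < mm s a b := F_pos h.d_mem
lemma m_lt_one : mm s a b < 1 := F_lt_one h.d_mem
lemma M_pos : 0 < MM s a b := F_pos h.c_mem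
lemma M_lt_one : MM s a b < 1 := F_lt_one h.c_mem

lemma M_eq : MM s a b = 1 - mm s a (1 - b) := by
  have hd := h.d_mem
  have := F_symm (s := s) (a := a) (b := b) hd
  rw [sub_sub_cancel] at this
  unfold MM mm
  rw [this]

lemma m_low : Real.exp (-(a * (1 - b) + 2)) ≤ mm s a b := by
  have hd := h.d_mem
  have h1 := F_ge (s := s) (a := a) (b := b) h.hs.le hd
  have hds : (1:ℝ)/2 ≤ (1 - cc s a) ^ s := by
    have hc := h.c_mem
    have h2 : (1 - cc s a) ^ (1:ℝ) ≤ (1 - cc s a) ^ s :=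
      Real.rpow_le_rpow_of_exponent_ge h.d_mem.1 (by linarith [hc.1]) h.hs1.le
    rw [Real.rpow_one] at h2
    have := cc_le h.hs h.hs1 h.ha8
    linarith
  have hexp : 1 + Real.exp (a * (1 - cc s a - b)) ≤ 2 * Real.exp (a * (1 - b)) := by
    have h3 : Real.exp (a * (1 - cc s a - b)) ≤ Real.exp (a * (1 - b)) := by
      apply Real.exp_le_exp.2
      have := cc_pos h.hs h.hs1 h.ha8
      nlinarith [h.ha0]
    have h4 : (1:ℝ) ≤ Real.exp (a * (1 - b)) := by
      have h5 : 0 ≤ a * (1 - b) := by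
        have := h.hbr; have := h.hb₀0
        nlinarith [h.ha0]
      nlinarith [Real.add_one_le_exp (a * (1 - b))]
    linarith
  have key : Real.exp (-(a * (1 - b) + 2)) ≤
      (1 - cc s a) ^ s / (1 + Real.exp (a * (1 - cc s a - b))) := by
    rw [le_div_iff₀ (by positivity)]
    have e4 := exp_two_ge_four
    have : Real.exp (-(a * (1 - b) + 2)) * (2 * Real.exp (a * (1 - b))) = 2 / Real.exp 2 := by
      rw [show -(a * (1 - b) + 2) = -(a*(1-b)) + -2 by ring, Real.exp_add, Real.exp_neg,
        Real.exp_neg]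
      field_simp
    have h5 : Real.exp (-(a * (1 - b) + 2)) * (1 + Real.exp (a * (1 - cc s a - b)))
        ≤ Real.exp (-(a * (1 - b) + 2)) * (2 * Real.exp (a * (1 - b))) :=
      mul_le_mul_of_nonneg_left hexp (Real.exp_pos _).le
    rw [this] at h5
    have h6 : 2 / Real.exp 2 ≤ 1/2 := by
      rw [div_le_iff₀ (by positivity)]; linarith
    linarith
  exact key.trans h1

lemma m_up : mm s a b ≤ Real.exp (-(a * (b₀ / 2))) := by
  have hd := h.d_mem
  have h1 := F_le (s := s) (a := a) (b := b) h.hs.le hd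
  rw [sub_sub_cancel] at h1
  have hc := h.c_mem
  have hL0 : 0 ≤ Real.log (a / s) := by
    apply Real.log_nonneg
    rw [le_div_iff₀ h.hs]
    have := h.ha8; have := h.hs1; linarith
  have hcs : (cc s a) ^ (-s) ≤ a / s := by
    have hT : Real.exp (-(Real.log (a / s))) ≤ cc s a := by
      rw [Real.exp_neg, Real.exp_log (div_pos h.ha0 h.hs)]
      have heq : (a / s)⁻¹ = s / a := by
        rw [inv_div]
      rw [heq]
      exact cc_ge h.hs h.hs1 h.ha8
    calc (cc s a) ^ (-s) ≤ Real.exp (s * Real.log (a / s)) :=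
          rpow_neg_le_exp hc.1 h.hs.le hT
      _ ≤ Real.exp (1 * Real.log (a / s)) :=
          Real.exp_le_exp.2 (mul_le_mul_of_nonneg_right h.hs1.le hL0)
      _ = a / s := by rw [one_mul, Real.exp_log (div_pos h.ha0 h.hs)]
  have hac : a * cc s a ≤ 2 * s := by
    have h2 := cc_le' h.hs h.hs1 h.ha8
    have ha0 := h.ha0
    have := mul_le_mul_of_nonneg_left h2 ha0.le
    calc a * cc s a ≤ a * (2 * (s / a)) := this
      _ = 2 * s := by field_simp
  have hexp : Real.exp (-(a * (1 - cc s a - b))) ≤ Real.exp 2 * Real.exp (-(a * b₀)) := by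
    rw [← Real.exp_add]
    apply Real.exp_le_exp.2
    have hb := h.hbr
    have := h.ha0
    have h3 : a * (1 - b) ≥ a * b₀ := by nlinarith [h.hb₀0]
    have expand : -(a * (1 - cc s a - b)) = -(a * (1 - b)) + a * cc s a := by ring
    rw [expand]
    have hs2 : 2 * s ≤ 2 := by linarith [h.hs1]
    linarith [hac]
  calc mm s a b ≤ (cc s a) ^ (-s) * Real.exp (-(a * (1 - cc s a - b))) := h1
    _ ≤ (a / s) * (Real.exp 2 * Real.exp (-(a * b₀))) := by
        apply mul_le_mul hcs hexp (by positivity) (div_pos h.ha0 h.hs).le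
    _ = a / s * Real.exp 2 * Real.exp (-(a * b₀)) := by ring
    _ ≤ Real.exp (-(a * (b₀ / 2))) := h.hF5

lemma m_le_mbar : mm s a b ≤ Real.exp (-(a * ww s b₀)) := by
  have h1 := h.m_up
  have h2 : Real.exp (-(a * (b₀ / 2))) ≤ Real.exp (-(a * ww s b₀)) := by
    apply Real.exp_le_exp.2
    have hw : ww s b₀ ≤ b₀ / 2 := by have := h.hw_le_b₀; have := h.hb₀0; linarith
    have := mul_le_mul_of_nonneg_left hw h.ha0.le
    linarith
  linarith

lemma m_lt_W : mm s a b < Real.exp (-(a * ww s b₀)) := by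
  have h1 := h.m_up
  have h2 : Real.exp (-(a * (b₀ / 2))) < Real.exp (-(a * ww s b₀)) := by
    apply Real.exp_lt_exp.2
    have hw : ww s b₀ < b₀ / 2 := by have := h.hw_le_b₀; have := h.hb₀0; linarith
    have := mul_lt_mul_of_pos_left hw h.ha0
    linarith
  linarith

lemma m_lt_c : mm s a b < cc s a := lt_of_le_of_lt h.m_le_mbar h.W_lt_c

lemma deepL_maps (hx1 : mm s a b ≤ x) (hx2 : x ≤ Real.exp (-(a * ww s b₀))) :
    1 - F s a b x ≤ Real.exp (-(2 * (a * ww s b₀))) ∧ F s a b x ≤ MM s a b := by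
  have hb₀0 := h.hb₀0
  have ha0 := h.ha0
  have hxI : x ∈ Ioo (0:ℝ) 1 := by
    constructor
    · exact lt_of_lt_of_le h.m_pos hx1
    · have := h.W_le_b₀; have := h.hb₀2; linarith
  constructor
  · have h1 := one_sub_F_le (s := s) (a := a) (b := b) h.hs.le hxI
    have hxs : x ^ (-s) ≤ Real.exp (s * (a * (1 - b) + 2)) :=
      rpow_neg_le_exp hxI.1 h.hs.le (le_trans h.m_low hx1)
    have hex : Real.exp (a * (x - b)) ≤ Real.exp (1 - a * b) := by
      apply Real.exp_le_exp.2
      have hax : a * x ≤ a * Real.exp (-(a * ww s b₀)) :=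
        mul_le_mul_of_nonneg_left hx2 ha0.le
      have := h.aW_le
      nlinarith
    have h2 : x ^ (-s) * Real.exp (a * (x - b))
        ≤ Real.exp (s * (a * (1 - b) + 2) + (1 - a * b)) := by
      rw [Real.exp_add]
      apply mul_le_mul hxs hex (Real.exp_pos _).le (Real.exp_pos _).le
    have h3 : Real.exp (s * (a * (1 - b) + 2) + (1 - a * b))
        ≤ Real.exp (-(2 * (a * ww s b₀))) := by
      apply Real.exp_le_exp.2
      have harr : a * rr s b₀ ≤ a * (b * (1 + s) - s) :=
        mul_le_mul_of_nonneg_left h.hθ2 ha0.le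
      have haw : a * ww s b₀ ≤ a * (rr s b₀ / 8) :=
        mul_le_mul_of_nonneg_left h.hw_le_ρ ha0.le
      have hF7 := h.hF7
      have hs1 := h.hs1
      have hs0 := h.hs
      nlinarith
    linarith
  · have hxc : x ≤ cc s a := le_trans hx2 h.W_lt_c.le
    have := (strictMonoOn_left (b := b) h.hs h.hs1 h.ha8).monotoneOn
      (Set.mem_Ioc.2 ⟨hxI.1, hxc⟩)
      (Set.mem_Ioc.2 ⟨cc_pos h.hs h.hs1 h.ha8, le_refl _⟩) hxc
    exact this

lemma midL_maps (hx1 : Real.exp (-(a * ww s b₀)) ≤ x) (hx2 : x ≤ b - b₀ / 2) :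
    1 - F s a b x ≤ Real.exp (-(2 * (a * ww s b₀))) ∧ F s a b x ≤ MM s a b := by
  have hb₀0 := h.hb₀0
  have ha0 := h.ha0
  have hxI : x ∈ Ioo (0:ℝ) 1 := by
    constructor
    · exact lt_of_lt_of_le h.W_pos hx1
    · have := h.hbr; linarith
  constructor
  · have h1 := one_sub_F_le (s := s) (a := a) (b := b) h.hs.le hxI
    have hxs : x ^ (-s) ≤ Real.exp (s * (a * ww s b₀)) :=
      rpow_neg_le_exp hxI.1 h.hs.le hx1
    have hex : Real.exp (a * (x - b)) ≤ Real.exp (-(a * (b₀ / 2))) := by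
      apply Real.exp_le_exp.2
      nlinarith
    have h2 : x ^ (-s) * Real.exp (a * (x - b))
        ≤ Real.exp (s * (a * ww s b₀) + -(a * (b₀ / 2))) := by
      rw [Real.exp_add]
      apply mul_le_mul hxs hex (Real.exp_pos _).le (Real.exp_pos _).le
    have h3 : Real.exp (s * (a * ww s b₀) + -(a * (b₀ / 2)))
        ≤ Real.exp (-(2 * (a * ww s b₀))) := by
      apply Real.exp_le_exp.2
      have haw : a * ww s b₀ ≤ a * (b₀ / 8) :=
        mul_le_mul_of_nonneg_left h.hw_le_b₀ ha0.le
      have hw0 : 0 < a * ww s b₀ := mul_pos ha0 h.hw_pos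
      have hs1 := h.hs1
      have hs0 := h.hs
      nlinarith
    linarith
  · rcases le_or_gt x (cc s a) with hc | hc
    · exact (strictMonoOn_left (b := b) h.hs h.hs1 h.ha8).monotoneOn
        (Set.mem_Ioc.2 ⟨hxI.1, hc⟩)
        (Set.mem_Ioc.2 ⟨cc_pos h.hs h.hs1 h.ha8, le_refl _⟩) hc
    · have hcb := h.c_le_b₀
      have hd : x ≤ 1 - cc s a := by
        have := h.hbr; linarith
      have hcd : cc s a ≤ 1 - cc s a := by
        have := cc_le h.hs h.hs1 h.ha8; linarith
      exact (strictAntiOn_mid (b := b) h.hs h.hs1 h.ha8).antitoneOn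
        (Set.mem_Icc.2 ⟨le_refl _, hcd⟩)
        (Set.mem_Icc.2 ⟨hc.le, hd⟩) hc.le

lemma left_maps (hx1 : mm s a b ≤ x) (hx2 : x ≤ b - b₀ / 2) :
    F s a b x ∈ Icc (1 - Real.exp (-(2 * (a * ww s b₀)))) (MM s a b) := by
  rcases le_total x (Real.exp (-(a * ww s b₀))) with hc | hc
  · have := h.deepL_maps hx1 hc
    exact ⟨by linarith [this.1], this.2⟩
  · have := h.midL_maps hc hx2
    exact ⟨by linarith [this.1], this.2⟩

lemma right_maps (hy1 : b + b₀ / 2 ≤ y) (hy2 : y ≤ MM s a b) :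
    F s a b y ∈ Icc (mm s a b) (Real.exp (-(2 * (a * ww s b₀)))) := by
  have h' := h.symm
  have hyI : y ∈ Ioo (0:ℝ) 1 := by
    constructor
    · have := h.hb₀0; have := h.hbpos; linarith
    · exact lt_of_le_of_lt hy2 h.M_lt_one
  have hx1' : mm s a (1 - b) ≤ 1 - y := by
    have := h.M_eq
    linarith
  have hx2' : 1 - y ≤ (1 - b) - b₀ / 2 := by linarith
  have hres := h'.left_maps hx1' hx2'
  have hMeq : MM s a (1 - b) = 1 - mm s a b := by
    have := h'.M_eq
    rwa [sub_sub_cancel] at this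
  have hsymm : F s a b y = 1 - F s a (1 - b) (1 - y) := by
    have := F_symm (s := s) (a := a) (b := b) (x := 1 - y)
      ⟨by linarith [hyI.2], by linarith [hyI.1]⟩
    rwa [sub_sub_cancel] at this
  rw [hsymm]
  rcases hres with ⟨hl, hr⟩
  rw [hMeq] at hr
  exact ⟨by linarith, by linarith⟩

lemma F_le_M (hx1 : 0 < x) (hx2 : x ≤ 1 - cc s a) : F s a b x ≤ MM s a b := by
  rcases le_or_gt x (cc s a) with hc | hc
  · exact (strictMonoOn_left (b := b) h.hs h.hs1 h.ha8).monotoneOn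
      (Set.mem_Ioc.2 ⟨hx1, hc⟩)
      (Set.mem_Ioc.2 ⟨cc_pos h.hs h.hs1 h.ha8, le_refl _⟩) hc
  · have hcd : cc s a ≤ 1 - cc s a := by
      have := cc_le h.hs h.hs1 h.ha8; linarith
    exact (strictAntiOn_mid (b := b) h.hs h.hs1 h.ha8).antitoneOn
      (Set.mem_Icc.2 ⟨le_refl _, hcd⟩)
      (Set.mem_Icc.2 ⟨hc.le, hx2⟩) hc.le

lemma m_le_F (hx1 : cc s a ≤ x) (hx2 : x < 1) : mm s a b ≤ F s a b x := by
  rcases le_or_gt x (1 - cc s a) with hc | hc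
  · have hcd : cc s a ≤ 1 - cc s a := by
      have := cc_le h.hs h.hs1 h.ha8; linarith
    exact (strictAntiOn_mid (b := b) h.hs h.hs1 h.ha8).antitoneOn
      (Set.mem_Icc.2 ⟨hx1, hc⟩)
      (Set.mem_Icc.2 ⟨hcd, le_refl _⟩) hc
  · exact (strictMonoOn_right (b := b) h.hs h.hs1 h.ha8).monotoneOn
      (Set.mem_Ico.2 ⟨le_refl _, by linarith [cc_pos h.hs h.hs1 h.ha8]⟩)
      (Set.mem_Ico.2 ⟨hc.le, hx2⟩) hc.le

lemma d_ge_b : b + b₀ / 2 ≤ 1 - cc s a := by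
  have := h.c_le_b₀; have := h.hbr; have := h.hb₀0; linarith

lemma c_le_b : cc s a ≤ b - b₀ / 2 := by
  have := h.c_le_b₀; have := h.hbl; have := h.hb₀0; linarith

lemma W2_le_M : Real.exp (-(2 * (a * ww s b₀))) ≤ MM s a b := by
  have h1 : Real.exp (-(2 * (a * ww s b₀))) ≤ Real.exp (-(a * ww s b₀)) := by
    apply Real.exp_le_exp.2
    have := mul_pos h.ha0 h.hw_pos
    linarith
  have h2 := h.symm.m_le_mbar
  have h3 := h.M_eq
  have h4 := h.W_le_b₀
  have := h.hb₀2
  linarith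

lemma m_le_W2' : mm s a b ≤ 1 - Real.exp (-(2 * (a * ww s b₀))) := by
  have h1 : Real.exp (-(2 * (a * ww s b₀))) ≤ Real.exp (-(a * ww s b₀)) := by
    apply Real.exp_le_exp.2
    have := mul_pos h.ha0 h.hw_pos
    linarith
  have h2 := h.m_le_mbar
  have h4 := h.W_le_b₀
  have := h.hb₀2
  linarith

lemma lam_maps (hx : x ∈ Icc (mm s a b) (MM s a b)) : F s a b x ∈ Icc (mm s a b) (MM s a b) := by
  have hxI : x ∈ Ioo (0:ℝ) 1 :=
    ⟨lt_of_lt_of_le h.m_pos hx.1, lt_of_le_of_lt hx.2 h.M_lt_one⟩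
  constructor
  · rcases le_or_gt (cc s a) x with hc | hc
    · exact h.m_le_F hc hxI.2
    · have := h.left_maps hx.1 (le_trans hc.le h.c_le_b)
      have h2 := h.m_le_W2'
      linarith [this.1]
  · rcases le_or_gt x (1 - cc s a) with hc | hc
    · exact h.F_le_M hxI.1 hc
    · have := h.right_maps (le_trans h.d_ge_b hc.le) hx.2
      linarith [this.2, h.W2_le_M]

lemma escape_low (hx1 : 0 < x) (hx2 : x ≤ Real.exp (-(a * (b₀ / 2)))) :
    2 * x ≤ F s a b x := by
  have hb₀0 := h.hb₀0
  have hb₀2 := h.hb₀2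
  have hmb := h.hF6a
  have hxI : x ∈ Ioo (0:ℝ) 1 := ⟨hx1, by nlinarith⟩
  have hxs_pos : 0 < x ^ s := Real.rpow_pos_of_pos hx1 s
  have hE0 := E_pos (s := s) (a := a) (b := b) hxI
  have hE1 : (1 - x) ^ s * Real.exp (a * (x - b)) ≤ 1 := by
    have h1 : (1 - x) ^ s ≤ 1 :=
      Real.rpow_le_one (by linarith [hxI.2]) (by linarith [hxI.1]) h.hs.le
    have h2 : Real.exp (a * (x - b)) ≤ 1 := by
      rw [Real.exp_le_one_iff]
      have hxb : x ≤ b := by have := h.hbl; nlinarith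
      nlinarith [h.ha0]
    nlinarith [Real.exp_pos (a * (x - b)), Real.rpow_pos_of_pos (show (0:ℝ) < 1 - x by linarith [hxI.2]) s]
  have hx14 : x ^ (1 - s) ≤ 1 / 4 := by
    calc x ^ (1 - s) ≤ (Real.exp (-(a * (b₀ / 2)))) ^ (1 - s) :=
          Real.rpow_le_rpow hx1.le hx2 (by linarith [h.hs1])
      _ = Real.exp (-(a * (b₀ / 2)) * (1 - s)) := (Real.exp_mul _ _).symm
      _ ≤ 1 / 4 := h.hF6b
  have hxx : x ≤ x ^ s / 4 := by
    have hsplit : x ^ s * x ^ (1 - s) = x := by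
      rw [← Real.rpow_add hx1]
      norm_num
    nlinarith [mul_le_mul_of_nonneg_left hx14 hxs_pos.le]
  have hxs1 : x ^ s ≤ 1 := Real.rpow_le_one hx1.le hxI.2.le h.hs.le
  rw [F, le_div_iff₀ (denom_pos hxI)]
  nlinarith [mul_le_mul_of_nonneg_right hxx
    (show (0:ℝ) ≤ x ^ s + (1 - x) ^ s * Real.exp (a * (x - b)) by linarith)]

lemma N_sub (hy : y ∈ Icc (b - b₀ / 2) (b + b₀ / 2)) :
    y ∈ Icc (cc s a) (1 - cc s a) :=
  ⟨le_trans h.c_le_b hy.1, le_trans hy.2 h.d_ge_b⟩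

lemma N_subI (hy : y ∈ Icc (b - b₀ / 2) (b + b₀ / 2)) : y ∈ Ioo (0:ℝ) 1 := by
  have h1 := h.N_sub hy
  have hc := cc_pos h.hs h.hs1 h.ha8
  exact ⟨lt_of_lt_of_le hc h1.1, lt_of_le_of_lt h1.2 (by linarith)⟩

lemma deriv_le_neg_two {ξ : ℝ} (hξ : ξ ∈ Icc (b - b₀ / 2) (b + b₀ / 2))
    (hFξ : F s a b ξ ∈ Icc (b - b₀ / 2) (b + b₀ / 2)) :
    F s a b ξ * (1 - F s a b ξ) * (s / (ξ * (1 - ξ)) - a) ≤ -2 := by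
  have hb₀0 := h.hb₀0
  have hbl := h.hbl
  have hbr := h.hbr
  have ha0 := h.ha0
  have hξb : b₀ / 2 ≤ ξ := by linarith [hξ.1]
  have hξb' : ξ ≤ 1 - b₀ / 2 := by linarith [hξ.2]
  have hFb : b₀ / 2 ≤ F s a b ξ := by linarith [hFξ.1]
  have hFb' : F s a b ξ ≤ 1 - b₀ / 2 := by linarith [hFξ.2]
  have hden : b₀ ^ 2 / 4 ≤ ξ * (1 - ξ) := by nlinarith
  have hden0 : 0 < ξ * (1 - ξ) := by nlinarith
  have hsd : s / (ξ * (1 - ξ)) ≤ 4 / b₀ ^ 2 := by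
    rw [div_le_div_iff₀ hden0 (by positivity)]
    nlinarith [h.hs1]
  have hsd0 : 0 ≤ s / (ξ * (1 - ξ)) := div_nonneg h.hs.le hden0.le
  have hFprod : b₀ ^ 2 / 4 ≤ F s a b ξ * (1 - F s a b ξ) := by nlinarith
  have ha16 := h.hF9
  have hab2 : 16 ≤ a * b₀ ^ 2 := by
    rw [div_le_iff₀ (by positivity)] at ha16
    linarith
  have hkey : a - s / (ξ * (1 - ξ)) ≥ a - a / 4 := by
    have : (4:ℝ) / b₀ ^ 2 ≤ a / 4 := by
      rw [div_le_div_iff₀ (by positivity) (by norm_num)]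
      nlinarith
    linarith
  have hFle : F s a b ξ * (1 - F s a b ξ) ≤ 1 := by nlinarith
  have h2 : 2 ≤ F s a b ξ * (1 - F s a b ξ) * (a - s / (ξ * (1 - ξ))) := by
    have hpos : 0 ≤ a - a / 4 := by linarith
    calc (2:ℝ) ≤ b₀ ^ 2 / 4 * (3 * a / 4) := by nlinarith
      _ ≤ F s a b ξ * (1 - F s a b ξ) * (a - s / (ξ * (1 - ξ))) := by
          apply mul_le_mul hFprod (by linarith) (by linarith) (by nlinarith)
  nlinarith

lemma expansion {u xb : ℝ} (hu : u ∈ Icc (b - b₀ / 2) (b + b₀ / 2))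
    (hxb : xb ∈ Icc (b - b₀ / 2) (b + b₀ / 2)) (hFxb : F s a b xb = xb)
    (hFu : F s a b u ∈ Icc (b - b₀ / 2) (b + b₀ / 2)) :
    2 * |u - xb| ≤ |F s a b u - xb| := by
  have hanti := strictAntiOn_mid (b := b) h.hs h.hs1 h.ha8
  rcases lt_trichotomy u xb with hlt | heq | hgt
  · have hcont : ContinuousOn (F s a b) (Icc u xb) := by
      apply contOn
      intro y hy
      exact h.N_subI ⟨le_trans hu.1 hy.1, le_trans hy.2 hxb.2⟩
    have hder : ∀ y ∈ Ioo u xb, HasDerivAt (F s a b)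
        (F s a b y * (1 - F s a b y) * (s / (y * (1 - y)) - a)) y := by
      intro y hy
      exact hasDerivAt_F (h.N_subI ⟨by linarith [hy.1, hu.1], by linarith [hy.2, hxb.2]⟩)
    obtain ⟨ξ, hξmem, hslope⟩ := exists_hasDerivAt_eq_slope (F s a b) _ hlt hcont hder
    have hξN : ξ ∈ Icc (b - b₀ / 2) (b + b₀ / 2) :=
      ⟨by linarith [hξmem.1, hu.1], by linarith [hξmem.2, hxb.2]⟩
    have hFξN : F s a b ξ ∈ Icc (b - b₀ / 2) (b + b₀ / 2) := by
      constructor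
      · calc b - b₀ / 2 ≤ xb := hxb.1
          _ = F s a b xb := hFxb.symm
          _ ≤ F s a b ξ := (hanti.antitoneOn (h.N_sub hξN)
              (h.N_sub hxb) hξmem.2.le)
      · calc F s a b ξ ≤ F s a b u := hanti.antitoneOn (h.N_sub hu) (h.N_sub hξN) hξmem.1.le
          _ ≤ b + b₀ / 2 := hFu.2
    have hd2 := h.deriv_le_neg_two hξN hFξN
    rw [hslope, hFxb] at hd2
    -- (xb - F u)/(xb - u) ≤ -2
    have hxbu : 0 < xb - u := by linarith
    rw [div_le_iff₀ hxbu] at hd2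
    have h1 : F s a b u - xb ≥ 2 * (xb - u) := by linarith
    rw [abs_of_neg (by linarith : u - xb < 0), abs_of_pos (by nlinarith : (0:ℝ) < F s a b u - xb)]
    linarith
  · subst heq
    rw [hFxb]
    simp
  · have hcont : ContinuousOn (F s a b) (Icc xb u) := by
      apply contOn
      intro y hy
      exact h.N_subI ⟨le_trans hxb.1 hy.1, le_trans hy.2 hu.2⟩
    have hder : ∀ y ∈ Ioo xb u, HasDerivAt (F s a b)
        (F s a b y * (1 - F s a b y) * (s / (y * (1 - y)) - a)) y := by
      intro y hy
      exact hasDerivAt_F (h.N_subI ⟨by linarith [hy.1, hxb.1], by linarith [hy.2, hu.2]⟩)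
    obtain ⟨ξ, hξmem, hslope⟩ := exists_hasDerivAt_eq_slope (F s a b) _ hgt hcont hder
    have hξN : ξ ∈ Icc (b - b₀ / 2) (b + b₀ / 2) :=
      ⟨by linarith [hξmem.1, hxb.1], by linarith [hξmem.2, hu.2]⟩
    have hFξN : F s a b ξ ∈ Icc (b - b₀ / 2) (b + b₀ / 2) := by
      constructor
      · calc b - b₀ / 2 ≤ F s a b u := hFu.1
          _ ≤ F s a b ξ := hanti.antitoneOn (h.N_sub hξN) (h.N_sub hu) hξmem.2.le
      · calc F s a b ξ ≤ F s a b xb := hanti.antitoneOn (h.N_sub hxb) (h.N_sub hξN) hξmem.1.le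
          _ = xb := hFxb
          _ ≤ b + b₀ / 2 := hxb.2
    have hd2 := h.deriv_le_neg_two hξN hFξN
    rw [hslope, hFxb] at hd2
    have hxbu : 0 < u - xb := by linarith
    rw [div_le_iff₀ hxbu] at hd2
    have h1 : xb - F s a b u ≥ 2 * (u - xb) := by linarith
    rw [abs_of_pos (by linarith : (0:ℝ) < u - xb),
      abs_of_neg (by nlinarith : F s a b u - xb < 0)]
    linarith

lemma mm_le_left : mm s a b ≤ b - b₀ / 2 := by
  have h1 := h.m_up
  have h2 := h.hF6a
  have := h.hbl; have := h.hb₀0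
  linarith

lemma M_ge_right : b + b₀ / 2 ≤ MM s a b := by
  have h1 := h.symm.m_up
  have h2 := h.hF6a
  have h3 := h.M_eq
  have := h.hbr; have := h.hb₀0
  linarith

lemma W2_small : Real.exp (-(2 * (a * ww s b₀))) ≤ b₀ / 4 := by
  have h1 : Real.exp (-(2 * (a * ww s b₀))) ≤ Real.exp (-(a * ww s b₀)) := by
    apply Real.exp_le_exp.2
    have := mul_pos h.ha0 h.hw_pos; linarith
  linarith [h.W_le_b₀]

lemma xbar_exists : ∃ xb ∈ Ioo (b - b₀ / 2) (b + b₀ / 2), F s a b xb = xb := by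
  have hb₀0 := h.hb₀0
  have hab : b - b₀ / 2 ≤ b + b₀ / 2 := by linarith
  have hsub : ∀ y ∈ Icc (b - b₀ / 2) (b + b₀ / 2), y ∈ Ioo (0:ℝ) 1 := fun y hy => h.N_subI hy
  have hcont : ContinuousOn (fun x => F s a b x - x) (Icc (b - b₀ / 2) (b + b₀ / 2)) :=
    (contOn hsub).sub continuousOn_id
  have h1 : 0 < F s a b (b - b₀ / 2) - (b - b₀ / 2) := by
    have hl := h.left_maps h.mm_le_left (le_refl _)
    have := h.W2_small
    have := h.hbr
    linarith [hl.1]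
  have h2 : F s a b (b + b₀ / 2) - (b + b₀ / 2) < 0 := by
    have hr := h.right_maps (le_refl _) h.M_ge_right
    have := h.W2_small
    have := h.hbl
    linarith [hr.2]
  have := intermediate_value_Ioo' hab hcont
    (show (0:ℝ) ∈ Ioo ((fun x => F s a b x - x) (b + b₀ / 2))
      ((fun x => F s a b x - x) (b - b₀ / 2)) from ⟨h2, h1⟩)
  obtain ⟨xb, hxb, hgxb⟩ := this
  refine ⟨xb, hxb, ?_⟩
  have : F s a b xb - xb = 0 := hgxb
  linarith

lemma fiber_countable (z : ℝ) :
    Set.Countable {x | x ∈ Ioo (0:ℝ) 1 ∧ F s a b x = z} := by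
  have hc := cc_pos h.hs h.hs1 h.ha8
  have hc4 := cc_le h.hs h.hs1 h.ha8
  have hmono1 := (strictMonoOn_left (b := b) h.hs h.hs1 h.ha8).injOn
  have hmono2 := (strictAntiOn_mid (b := b) h.hs h.hs1 h.ha8).injOn
  have hmono3 := (strictMonoOn_right (b := b) h.hs h.hs1 h.ha8).injOn
  have hsub : {x | x ∈ Ioo (0:ℝ) 1 ∧ F s a b x = z} ⊆
      {x | x ∈ Ioc (0:ℝ) (cc s a) ∧ F s a b x = z} ∪
      ({x | x ∈ Icc (cc s a) (1 - cc s a) ∧ F s a b x = z} ∪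
       {x | x ∈ Ico (1 - cc s a) 1 ∧ F s a b x = z}) := by
    intro x hx
    rcases le_or_gt x (cc s a) with h1 | h1
    · exact Or.inl ⟨⟨hx.1.1, h1⟩, hx.2⟩
    · rcases le_or_gt x (1 - cc s a) with h2 | h2
      · exact Or.inr (Or.inl ⟨⟨h1.le, h2⟩, hx.2⟩)
      · exact Or.inr (Or.inr ⟨⟨h2.le, hx.1.2⟩, hx.2⟩)
  apply Set.Countable.mono hsub
  refine Set.Countable.union ?_ (Set.Countable.union ?_ ?_)
  · apply Set.Subsingleton.countable
    intro x hx y hy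
    exact hmono1 hx.1 hy.1 (hx.2.trans hy.2.symm)
  · apply Set.Subsingleton.countable
    intro x hx y hy
    exact hmono2 hx.1 hy.1 (hx.2.trans hy.2.symm)
  · apply Set.Subsingleton.countable
    intro x hx y hy
    exact hmono3 hx.1 hy.1 (hx.2.trans hy.2.symm)

lemma iter_mem (hx : x ∈ Ioo (0:ℝ) 1) : ∀ k, (F s a b)^[k] x ∈ Ioo (0:ℝ) 1 := by
  intro k
  induction k with
  | zero => exact hx
  | succ k ih =>
    rw [Function.iterate_succ_apply']
    exact F_mem ih

lemma enter_from_below (hx : x ∈ Ioo (0:ℝ) 1) (hlow : x < mm s a b) :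
    ∃ n, (F s a b)^[n] x ∈ Icc (mm s a b) (MM s a b) := by
  classical
  have hiter := h.iter_mem hx
  have hex : ∃ k, mm s a b < (F s a b)^[k] x := by
    by_contra hcon
    push_neg at hcon
    have hgrow : ∀ k, 2 ^ k * x ≤ (F s a b)^[k] x := by
      intro k
      induction k with
      | zero => simp
      | succ k ih =>
        rw [Function.iterate_succ_apply', pow_succ]
        have hk := hcon k
        have h2 := h.escape_low (hiter k).1 (le_trans hk h.m_up)
        calc 2 ^ k * 2 * x = 2 * (2 ^ k * x) := by ring
          _ ≤ 2 * (F s a b)^[k] x := by linarith [ih]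
          _ ≤ F s a b ((F s a b)^[k] x) := h2
    obtain ⟨k, hk⟩ := pow_unbounded_of_one_lt (R := ℝ) (mm s a b / x) one_lt_two
    rw [div_lt_iff₀ hx.1] at hk
    linarith [hgrow k, hcon k]
  have hk0pos : 0 < Nat.find hex := by
    rcases Nat.eq_zero_or_pos (Nat.find hex) with h0 | h0
    · exfalso
      have hsp := Nat.find_spec hex
      rw [h0] at hsp
      simp at hsp
      linarith
    · exact h0
  obtain ⟨j, hj⟩ := Nat.exists_eq_succ_of_ne_zero hk0pos.ne'
  refine ⟨Nat.find hex, (Nat.find_spec hex).le, ?_⟩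
  have hjle : (F s a b)^[j] x ≤ mm s a b := by
    have hmin := Nat.find_min hex (m := j) (by omega)
    push_neg at hmin
    exact hmin
  rw [hj, Function.iterate_succ_apply']
  apply h.F_le_M (hiter j).1
  have h1 := h.m_lt_c
  have h2 := cc_le h.hs h.hs1 h.ha8
  linarith

lemma stay_in_lam (hx : x ∈ Icc (mm s a b) (MM s a b)) :
    ∀ k, (F s a b)^[k] x ∈ Icc (mm s a b) (MM s a b) := by
  intro k
  induction k with
  | zero => exact hx
  | succ k ih =>
    rw [Function.iterate_succ_apply']
    exact h.lam_maps ih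

end Setup

/-- Conjugation of iterates under `x ↦ 1 - x`. -/
lemma iterate_symm {s a b : ℝ} : ∀ n, ∀ x ∈ Ioo (0:ℝ) 1,
    (F s a b)^[n] x = 1 - (F s a (1 - b))^[n] (1 - x) := by
  intro n
  induction n with
  | zero => intro x _; simp
  | succ n ih =>
    intro x hx
    have hx' : 1 - x ∈ Ioo (0:ℝ) 1 := ⟨by linarith [hx.2], by linarith [hx.1]⟩
    have h1 : 1 - F s a b x = F s a (1 - b) (1 - x) := by
      have := F_symm (s := s) (a := a) (b := b) (x := 1 - x) hx'
      rw [sub_sub_cancel] at this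
      linarith
    rw [Function.iterate_succ_apply, Function.iterate_succ_apply]
    rw [ih (F s a b x) (F_mem hx), ← h1]

/-- `g((g∘g)^[n] (g x)) = (g∘g)^[n+1] x`. -/
lemma comp_iterate_shift (g : ℝ → ℝ) : ∀ (n : ℕ) (x : ℝ),
    g ((g ∘ g)^[n] (g x)) = (g ∘ g)^[n + 1] x := by
  intro n
  induction n with
  | zero => intro x; simp [Function.comp]
  | succ n ih =>
    intro x
    rw [Function.iterate_succ_apply]
    have h1 : (g ∘ g) (g x) = g ((g ∘ g) x) := rfl
    rw [h1, ih ((g ∘ g) x), ← Function.iterate_succ_apply]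

/-- The conjugated doubling map in logarithmic coordinates. -/
noncomputable def GG (s a b t : ℝ) : ℝ := Real.log (F s a b (F s a b (Real.exp t)))

lemma hasDerivAt_philog {s a b t : ℝ} (hx : Real.exp t ∈ Ioo (0:ℝ) 1) :
    HasDerivAt (fun τ => Real.log (1 - F s a b (Real.exp τ)))
      (F s a b (Real.exp t) * (a * Real.exp t - s / (1 - Real.exp t))) t := by
  have h1 := Real.hasDerivAt_exp t
  have h2 := hasDerivAt_F (s := s) (a := a) (b := b) hx
  have h3 := h2.comp t h1
  have h4 : HasDerivAt (fun τ => 1 - F s a b (Real.exp τ))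
      (-(F s a b (Real.exp t) * (1 - F s a b (Real.exp t)) *
        (s / (Real.exp t * (1 - Real.exp t)) - a) * Real.exp t)) t := h3.const_sub 1
  have hne : 1 - F s a b (Real.exp t) ≠ 0 := by
    have := F_lt_one (s := s) (a := a) (b := b) hx
    intro hcon; rw [sub_eq_zero] at hcon; exact this.ne hcon.symm
  have h5 := h4.log hne
  convert h5 using 1
  have hu0 : Real.exp t ≠ 0 := (Real.exp_pos t).ne'
  have h1u : (1:ℝ) - Real.exp t ≠ 0 := by
    have := hx.2; intro hcon; rw [sub_eq_zero] at hcon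
    exact this.ne hcon.symm
  field_simp
  ring

namespace Setup

variable {s b₀ a b t u : ℝ} (h : Setup s b₀ a b)
include h

lemma philog_bound (hm : mm s a b ≤ Real.exp t)
    (hW : Real.exp t ≤ Real.exp (-(a * ww s b₀))) :
    |F s a b (Real.exp t) * (a * Real.exp t - s / (1 - Real.exp t))| ≤ (1 + s) / 2 := by
  have ha0 := h.ha0
  have hW8 := h.hF8
  have hs0 := h.hs
  have hs1 := h.hs1
  have hu0 : 0 < Real.exp t := Real.exp_pos t
  have hu2 : Real.exp t < 1/2 := lt_of_le_of_lt hW h.W_lt_half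
  have hxI : Real.exp t ∈ Ioo (0:ℝ) 1 := ⟨hu0, by linarith⟩
  have hF0 := F_pos (s := s) (a := a) (b := b) hxI
  have hF1 := F_lt_one (s := s) (a := a) (b := b) hxI
  have hau : a * Real.exp t ≤ (1 - s) / 4 :=
    le_trans (mul_le_mul_of_nonneg_left hW ha0.le) h.hF4
  have h1u : (0:ℝ) < 1 - Real.exp t := by linarith
  have hsu : s / (1 - Real.exp t) ≤ s + (1 - s) / 4 := by
    rw [div_le_iff₀ h1u]
    have hWs : Real.exp t ≤ (1 - s) / 8 := le_trans hW hW8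
    nlinarith
  have hsu0 : 0 ≤ s / (1 - Real.exp t) := by positivity
  rw [abs_le]
  constructor
  · nlinarith [mul_le_mul_of_nonneg_left hsu hF0.le]
  · nlinarith [mul_nonneg hF0.le hsu0]

lemma lip_left_aux (htu : t ≤ u) (ht1 : Real.log (mm s a b) ≤ t)
    (hu2 : u ≤ -(a * ww s b₀)) :
    |Real.log (1 - F s a b (Real.exp u)) - Real.log (1 - F s a b (Real.exp t))|
      ≤ (1 + s) / 2 * (u - t) := by
  have hmem : ∀ τ ∈ Icc t u, mm s a b ≤ Real.exp τ ∧ Real.exp τ ≤ Real.exp (-(a * ww s b₀)) := by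
    intro τ hτ
    constructor
    · calc mm s a b = Real.exp (Real.log (mm s a b)) := (Real.exp_log h.m_pos).symm
        _ ≤ Real.exp τ := Real.exp_le_exp.2 (le_trans ht1 hτ.1)
    · exact Real.exp_le_exp.2 (le_trans hτ.2 hu2)
  have hIoo : ∀ τ ∈ Icc t u, Real.exp τ ∈ Ioo (0:ℝ) 1 := by
    intro τ hτ
    have := hmem τ hτ
    exact ⟨Real.exp_pos τ, lt_trans (lt_of_le_of_lt this.2 h.W_lt_half) (by norm_num)⟩
  have key : ∀ τ ∈ Icc t u,
      HasDerivWithinAt (fun τ => Real.log (1 - F s a b (Real.exp τ)))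
        (F s a b (Real.exp τ) * (a * Real.exp τ - s / (1 - Real.exp τ))) (Icc t u) τ :=
    fun τ hτ => (hasDerivAt_philog (hIoo τ hτ)).hasDerivWithinAt
  have bound : ∀ τ ∈ Ico t u,
      ‖F s a b (Real.exp τ) * (a * Real.exp τ - s / (1 - Real.exp τ))‖ ≤ (1 + s) / 2 := by
    intro τ hτ
    rw [Real.norm_eq_abs]
    exact h.philog_bound (hmem τ ⟨hτ.1, hτ.2.le⟩).1 (hmem τ ⟨hτ.1, hτ.2.le⟩).2
  have := norm_image_sub_le_of_norm_deriv_le_segment' key bound u (right_mem_Icc.2 htu)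
  rwa [Real.norm_eq_abs] at this

lemma lip_left (ht1 : Real.log (mm s a b) ≤ t) (ht2 : t ≤ -(a * ww s b₀))
    (hu1 : Real.log (mm s a b) ≤ u) (hu2 : u ≤ -(a * ww s b₀)) :
    |Real.log (1 - F s a b (Real.exp u)) - Real.log (1 - F s a b (Real.exp t))|
      ≤ (1 + s) / 2 * |u - t| := by
  rcases le_total t u with htu | htu
  · rw [abs_of_nonneg (by linarith : (0:ℝ) ≤ u - t)]
    exact h.lip_left_aux htu ht1 hu2
  · rw [abs_sub_comm, abs_of_nonpos (by linarith : u - t ≤ 0)]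
    have := h.lip_left_aux htu hu1 ht2
    calc |Real.log (1 - F s a b (Real.exp t)) - Real.log (1 - F s a b (Real.exp u))|
        ≤ (1 + s) / 2 * (t - u) := this
      _ = (1 + s) / 2 * -(u - t) := by ring

/-- Membership of the first leg `φ(t) = log(1 - F(e^t))` in the symmetric domain. -/
lemma phi_mem (ht1 : Real.log (mm s a b) ≤ t) (ht2 : t ≤ -(a * ww s b₀)) :
    Real.log (mm s a (1 - b)) ≤ Real.log (1 - F s a b (Real.exp t)) ∧
      Real.log (1 - F s a b (Real.exp t)) ≤ -(a * ww s b₀) := by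
  have hm : mm s a b ≤ Real.exp t := by
    calc mm s a b = Real.exp (Real.log (mm s a b)) := (Real.exp_log h.m_pos).symm
      _ ≤ Real.exp t := Real.exp_le_exp.2 ht1
  have hW : Real.exp t ≤ Real.exp (-(a * ww s b₀)) := Real.exp_le_exp.2 ht2
  have hd := h.deepL_maps hm hW
  have hMeq := h.M_eq
  have hlow : mm s a (1 - b) ≤ 1 - F s a b (Real.exp t) := by linarith [hd.2]
  have h2w : Real.exp (-(2 * (a * ww s b₀))) ≤ Real.exp (-(a * ww s b₀)) := by
    apply Real.exp_le_exp.2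
    have := mul_pos h.ha0 h.hw_pos; linarith
  constructor
  · exact Real.log_le_log h.symm.m_pos hlow
  · calc Real.log (1 - F s a b (Real.exp t)) ≤ Real.log (Real.exp (-(2 * (a * ww s b₀)))) :=
        Real.log_le_log (lt_of_lt_of_le h.symm.m_pos hlow) (by linarith [hd.1])
      _ = -(2 * (a * ww s b₀)) := Real.log_exp _
      _ ≤ -(a * ww s b₀) := by have := mul_pos h.ha0 h.hw_pos; linarith

lemma G_comp (ht : Real.exp t ∈ Ioo (0:ℝ) 1) :
    GG s a b t = Real.log (1 - F s a (1 - b) (Real.exp (Real.log (1 - F s a b (Real.exp t))))) := by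
  have hF := F_mem (s := s) (a := a) (b := b) ht
  have hpos : 0 < 1 - F s a b (Real.exp t) := by linarith [hF.2]
  rw [Real.exp_log hpos]
  unfold GG
  congr 1
  have := F_symm (s := s) (a := a) (b := b) (x := 1 - F s a b (Real.exp t))
    ⟨by linarith [hF.2], by linarith [hF.1]⟩
  rw [sub_sub_cancel] at this
  linarith [this]

lemma G_lip (ht1 : Real.log (mm s a b) ≤ t) (ht2 : t ≤ -(a * ww s b₀))
    (hu1 : Real.log (mm s a b) ≤ u) (hu2 : u ≤ -(a * ww s b₀)) :
    |GG s a b u - GG s a b t| ≤ (1 + s) / 2 * ((1 + s) / 2 * |u - t|) := by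
  have hexpt : Real.exp t ∈ Ioo (0:ℝ) 1 := by
    refine ⟨Real.exp_pos t, ?_⟩
    have : Real.exp t ≤ Real.exp (-(a * ww s b₀)) := Real.exp_le_exp.2 ht2
    linarith [h.W_lt_half]
  have hexpu : Real.exp u ∈ Ioo (0:ℝ) 1 := by
    refine ⟨Real.exp_pos u, ?_⟩
    have : Real.exp u ≤ Real.exp (-(a * ww s b₀)) := Real.exp_le_exp.2 hu2
    linarith [h.W_lt_half]
  rw [h.G_comp hexpt, h.G_comp hexpu]
  have hpt := h.phi_mem ht1 ht2
  have hpu := h.phi_mem hu1 hu2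
  have step2 := h.symm.lip_left hpt.1 hpt.2 hpu.1 hpu.2
  have step1 := h.lip_left ht1 ht2 hu1 hu2
  calc |Real.log (1 - F s a (1 - b) (Real.exp (Real.log (1 - F s a b (Real.exp u))))) -
        Real.log (1 - F s a (1 - b) (Real.exp (Real.log (1 - F s a b (Real.exp t)))))|
      ≤ (1 + s) / 2 * |Real.log (1 - F s a b (Real.exp u)) -
          Real.log (1 - F s a b (Real.exp t))| := step2
    _ ≤ (1 + s) / 2 * ((1 + s) / 2 * |u - t|) := by
        apply mul_le_mul_of_nonneg_left step1
        have := h.hs; linarith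

lemma G_maps (ht1 : Real.log (mm s a b) ≤ t) (ht2 : t ≤ -(a * ww s b₀)) :
    Real.log (mm s a b) ≤ GG s a b t ∧ GG s a b t ≤ -(2 * (a * ww s b₀)) ∧
      Real.exp (GG s a b t) = F s a b (F s a b (Real.exp t)) := by
  have hm : mm s a b ≤ Real.exp t := by
    calc mm s a b = Real.exp (Real.log (mm s a b)) := (Real.exp_log h.m_pos).symm
      _ ≤ Real.exp t := Real.exp_le_exp.2 ht1
  have hW : Real.exp t ≤ Real.exp (-(a * ww s b₀)) := Real.exp_le_exp.2 ht2
  have hd := h.deepL_maps hm hW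
  have hyb : b + b₀ / 2 ≤ F s a b (Real.exp t) := by
    have hW2 : Real.exp (-(2 * (a * ww s b₀))) ≤ b₀ / 2 := by
      have h1 : Real.exp (-(2 * (a * ww s b₀))) ≤ Real.exp (-(a * ww s b₀)) := by
        apply Real.exp_le_exp.2
        have := mul_pos h.ha0 h.hw_pos; linarith
      have := h.W_le_b₀; have := h.hb₀0; linarith
    have := h.hbr
    linarith [hd.1]
  have hz := h.right_maps hyb hd.2
  have hz0 : 0 < F s a b (F s a b (Real.exp t)) := lt_of_lt_of_le h.m_pos hz.1
  refine ⟨?_, ?_, ?_⟩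
  · unfold GG
    exact Real.log_le_log h.m_pos hz.1
  · unfold GG
    calc Real.log (F s a b (F s a b (Real.exp t)))
        ≤ Real.log (Real.exp (-(2 * (a * ww s b₀)))) := Real.log_le_log hz0 hz.2
      _ = -(2 * (a * ww s b₀)) := Real.log_exp _
  · unfold GG
    exact Real.exp_log hz0

lemma iter_fiber_countable : ∀ (n : ℕ) (z : ℝ),
    Set.Countable {x | x ∈ Ioo (0:ℝ) 1 ∧ (F s a b)^[n] x = z} := by
  intro n
  induction n with
  | zero =>
    intro z
    apply Set.Countable.mono ?_ (Set.countable_singleton z)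
    intro x hx
    exact hx.2
  | succ n ih =>
    intro z
    have hsub : {x | x ∈ Ioo (0:ℝ) 1 ∧ (F s a b)^[n+1] x = z} ⊆
        ⋃ y ∈ {y | y ∈ Ioo (0:ℝ) 1 ∧ (F s a b)^[n] y = z},
          {x | x ∈ Ioo (0:ℝ) 1 ∧ F s a b x = y} := by
      intro x hx
      obtain ⟨hx1, hx2⟩ := hx
      rw [Function.iterate_succ_apply] at hx2
      have hFx : F s a b x ∈ Ioo (0:ℝ) 1 := F_mem hx1
      exact Set.mem_biUnion (show F s a b x ∈ _ from ⟨hFx, hx2⟩) ⟨hx1, rfl⟩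
    exact Set.Countable.mono hsub (Set.Countable.biUnion (ih z) (fun y _ => h.fiber_countable y))

lemma preimages_countable (z : ℝ) :
    Set.Countable {x | x ∈ Ioo (0:ℝ) 1 ∧ ∃ n : ℕ, (F s a b)^[n] x = z} := by
  have heq : {x | x ∈ Ioo (0:ℝ) 1 ∧ ∃ n : ℕ, (F s a b)^[n] x = z}
      = ⋃ n : ℕ, {x | x ∈ Ioo (0:ℝ) 1 ∧ (F s a b)^[n] x = z} := by
    ext x
    simp only [mem_setOf_eq, Set.mem_iUnion]
    tauto
  rw [heq]
  exact Set.countable_iUnion (fun n => h.iter_fiber_countable n z)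

end Setup
/-! ### Eventual largeness of `a` -/

lemma eventually_mul_exp_le {κ δ : ℝ} (hκ : 0 < κ) (hδ : 0 < δ) :
    ∀ᶠ a : ℝ in atTop, a * Real.exp (-(a * κ)) ≤ δ := by
  have h1 : Tendsto (fun x : ℝ => x * Real.exp (-x)) atTop (nhds 0) := by
    have := tendsto_pow_mul_exp_neg_atTop_nhds_zero 1
    simpa using this
  have h2 : Tendsto (fun a : ℝ => a * κ) atTop atTop :=
    Tendsto.atTop_mul_const hκ tendsto_id
  have h3 := h1.comp h2
  have h4 : Tendsto (fun a : ℝ => a * Real.exp (-(a * κ))) atTop (nhds 0) := by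
    have heq : (fun a : ℝ => a * Real.exp (-(a * κ)))
        = fun a : ℝ => κ⁻¹ * ((a * κ) * Real.exp (-(a * κ))) := by
      funext a
      field_simp
    rw [heq]
    have h5 := h3.const_mul κ⁻¹
    simpa using h5
  exact h4.eventually_le_const hδ

lemma eventually_exp_le {κ δ : ℝ} (hκ : 0 < κ) (hδ : 0 < δ) :
    ∀ᶠ a : ℝ in atTop, Real.exp (-(a * κ)) ≤ δ := by
  filter_upwards [eventually_mul_exp_le hκ hδ, eventually_ge_atTop (1:ℝ)] with a h1 h2
  nlinarith [Real.exp_pos (-(a * κ))]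

lemma setup_eventually {s b₀ : ℝ} (hs : 0 < s) (hs1 : s < 1)
    (hρ : 0 < b₀ * (1 + s) - s) (hb₀2 : b₀ < 1/2) :
    ∃ a₁ > (0:ℝ), ∀ a ≥ a₁, ∀ b, b₀ ≤ b → b ≤ 1 - b₀ → Setup s b₀ a b := by
  have hb₀0 : 0 < b₀ := by nlinarith
  have hrr : 0 < rr s b₀ := hρ
  have hw : 0 < ww s b₀ := by
    unfold ww
    have : 0 < min (rr s b₀) b₀ := lt_min hrr hb₀0
    linarith
  have big : ∀ᶠ a : ℝ in atTop,
      (8 ≤ a) ∧ (2 * (s / a) ≤ b₀ / 4) ∧ (Real.exp (-(a * ww s b₀)) ≤ s / (2 * a)) ∧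
      (a * Real.exp (-(a * ww s b₀)) ≤ (1 - s) / 4) ∧
      (a / s * Real.exp 2 * Real.exp (-(a * b₀)) ≤ Real.exp (-(a * (b₀ / 2)))) ∧
      (Real.exp (-(a * (b₀ / 2))) ≤ b₀ / 4) ∧
      (Real.exp (-(a * (b₀ / 2)) * (1 - s)) ≤ 1 / 4) ∧
      (4 ≤ a * rr s b₀) ∧ (Real.exp (-(a * ww s b₀)) ≤ (1 - s) / 8) ∧
      (16 / b₀ ^ 2 ≤ a) ∧ (2 / b₀ * Real.exp (-(a * (b₀ / 2))) ≤ b₀ / 2) := by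
    have e1 : ∀ᶠ a : ℝ in atTop, (8:ℝ) ≤ a := eventually_ge_atTop 8
    have e2 : ∀ᶠ a : ℝ in atTop, 2 * (s / a) ≤ b₀ / 4 := by
      filter_upwards [eventually_ge_atTop (16 * s / b₀), eventually_gt_atTop (0:ℝ)] with a h1 h2
      have h3 : 16 * s ≤ a * b₀ := by
        rw [div_le_iff₀ hb₀0] at h1
        linarith
      have h4 : s / a ≤ b₀ / 8 := by
        rw [div_le_div_iff₀ h2 (by norm_num)]
        nlinarith
      linarith
    have e3 : ∀ᶠ a : ℝ in atTop, Real.exp (-(a * ww s b₀)) ≤ s / (2 * a) := by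
      filter_upwards [eventually_mul_exp_le hw (by linarith : (0:ℝ) < s / 2),
        eventually_gt_atTop (0:ℝ)] with a h1 h2
      rw [le_div_iff₀ (by linarith)]
      nlinarith [Real.exp_pos (-(a * ww s b₀))]
    have e4 := eventually_mul_exp_le hw (by linarith : (0:ℝ) < (1 - s) / 4)
    have e5 : ∀ᶠ a : ℝ in atTop,
        a / s * Real.exp 2 * Real.exp (-(a * b₀)) ≤ Real.exp (-(a * (b₀ / 2))) := by
      filter_upwards [eventually_mul_exp_le (by linarith : (0:ℝ) < b₀ / 2)
        (div_pos hs (Real.exp_pos 2))] with a h1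
      have hsplit : Real.exp (-(a * b₀))
          = Real.exp (-(a * (b₀ / 2))) * Real.exp (-(a * (b₀ / 2))) := by
        rw [← Real.exp_add]
        congr 1
        ring
      rw [hsplit]
      have h2 : a / s * Real.exp 2 * (Real.exp (-(a * (b₀ / 2))) * Real.exp (-(a * (b₀ / 2))))
          = (a * Real.exp (-(a * (b₀ / 2)))) * (Real.exp 2 / s) * Real.exp (-(a * (b₀ / 2))) := by
        field_simp
      rw [h2]
      have h3 : (a * Real.exp (-(a * (b₀ / 2)))) * (Real.exp 2 / s) ≤ 1 := by
        have h4 : (0:ℝ) < Real.exp 2 / s := div_pos (Real.exp_pos 2) hs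
        have h5 := mul_le_mul_of_nonneg_right h1 h4.le
        have h6 : s / Real.exp 2 * (Real.exp 2 / s) = 1 := by
          field_simp
        linarith [h6 ▸ h5]
      nlinarith [Real.exp_pos (-(a * (b₀ / 2))),
        mul_le_mul_of_nonneg_right h3 (Real.exp_pos (-(a * (b₀ / 2)))).le]
    have e6 := eventually_exp_le (by linarith : (0:ℝ) < b₀ / 2) (by linarith : (0:ℝ) < b₀ / 4)
    have e7 : ∀ᶠ a : ℝ in atTop, Real.exp (-(a * (b₀ / 2)) * (1 - s)) ≤ 1 / 4 := by
      filter_upwards [eventually_exp_le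
        (by nlinarith : (0:ℝ) < b₀ / 2 * (1 - s)) (by norm_num : (0:ℝ) < 1 / 4)] with a h1
      have : -(a * (b₀ / 2)) * (1 - s) = -(a * (b₀ / 2 * (1 - s))) := by ring
      rwa [this]
    have e8 : ∀ᶠ a : ℝ in atTop, 4 ≤ a * rr s b₀ := by
      filter_upwards [eventually_ge_atTop (4 / rr s b₀)] with a h1
      rw [div_le_iff₀ hrr] at h1
      linarith
    have e9 := eventually_exp_le hw (by linarith : (0:ℝ) < (1 - s) / 8)
    have e10 : ∀ᶠ a : ℝ in atTop, 16 / b₀ ^ 2 ≤ a := eventually_ge_atTop _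
    have e11 : ∀ᶠ a : ℝ in atTop, 2 / b₀ * Real.exp (-(a * (b₀ / 2))) ≤ b₀ / 2 := by
      filter_upwards [eventually_exp_le (by linarith : (0:ℝ) < b₀ / 2)
        (by positivity : (0:ℝ) < b₀ ^ 2 / 4)] with a h1
      have h2 : (0:ℝ) < 2 / b₀ := by positivity
      have h3 := mul_le_mul_of_nonneg_left h1 h2.le
      have h4 : 2 / b₀ * (b₀ ^ 2 / 4) = b₀ / 2 := by
        field_simp
        ring
      linarith [h4 ▸ h3]
    filter_upwards [e1, e2, e3, e4, e5, e6, e7, e8, e9, e10, e11] with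
      a h1 h2 h3 h4 h5 h6 h7 h8 h9 h10 h11
    exact ⟨h1, h2, h3, h4, h5, h6, h7, h8, h9, h10, h11⟩
  rw [eventually_atTop] at big
  obtain ⟨A, hA⟩ := big
  refine ⟨max A 1, lt_of_lt_of_le one_pos (le_max_right _ _), ?_⟩
  intro a ha b hbl hbr
  have hA' := hA a (le_trans (le_max_left _ _) ha)
  exact ⟨hs, hs1, hρ, hb₀2, hbl, hbr, hA'.1, hA'.2.1, hA'.2.2.1, hA'.2.2.2.1,
    hA'.2.2.2.2.1, hA'.2.2.2.2.2.1, hA'.2.2.2.2.2.2.1, hA'.2.2.2.2.2.2.2.1,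
    hA'.2.2.2.2.2.2.2.2.1, hA'.2.2.2.2.2.2.2.2.2.1, hA'.2.2.2.2.2.2.2.2.2.2⟩

/-! ### The attracting cycle -/

lemma main_cycle {s b₀ a b : ℝ} (h : Setup s b₀ a b) :
    ∃ p, (mm s a b < p ∧ p ≤ Real.exp (-(2 * (a * ww s b₀)))) ∧
      F s a b (F s a b p) = p ∧
      (∀ z, mm s a b ≤ z → z ≤ Real.exp (-(a * ww s b₀)) →
        Tendsto (fun n => (fun y => F s a b (F s a b y))^[n] z) atTop (nhds p)) := by
  classical
  have hTne : Real.log (mm s a b) ≤ -(a * ww s b₀) := by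
    have h1 := Real.log_le_log h.m_pos h.m_le_mbar
    rwa [Real.log_exp] at h1
  have haw : 0 < a * ww s b₀ := mul_pos h.ha0 h.hw_pos
  set T : Set ℝ := Icc (Real.log (mm s a b)) (-(a * ww s b₀)) with hT
  haveI : CompleteSpace T := (isClosed_Icc).completeSpace_coe
  haveI : Nonempty T := ⟨⟨Real.log (mm s a b), by rw [hT]; exact ⟨le_refl _, hTne⟩⟩⟩
  have hmapsT : ∀ t : ℝ, t ∈ T → GG s a b t ∈ T := by
    intro t ht
    rw [hT, mem_Icc] at ht ⊢
    obtain ⟨h1, h2, _⟩ := h.G_maps ht.1 ht.2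
    exact ⟨h1, by linarith⟩
  set Ghat : T → T := fun t => ⟨GG s a b t.1, hmapsT t.1 t.2⟩ with hGhat
  set K : NNReal := ⟨(1 + s) / 2 * ((1 + s) / 2), mul_self_nonneg _⟩ with hK
  have hKcoe : (K : ℝ) = (1 + s) / 2 * ((1 + s) / 2) := rfl
  have hK1 : K < 1 := by
    rw [← NNReal.coe_lt_coe, hKcoe]
    have := h.hs; have := h.hs1
    push_cast
    nlinarith
  have hlip : LipschitzWith K Ghat := by
    apply LipschitzWith.of_dist_le_mul
    intro t u
    obtain ⟨ht1, ht2⟩ := t.2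
    obtain ⟨hu1, hu2⟩ := u.2
    have hgl := h.G_lip hu1 hu2 ht1 ht2
    have hd1 : dist (Ghat t) (Ghat u) = |GG s a b t.1 - GG s a b u.1| := by
      rw [Subtype.dist_eq, Real.dist_eq]
    have hd2 : dist t u = |t.1 - u.1| := by
      rw [Subtype.dist_eq, Real.dist_eq]
    rw [hd1, hd2, hKcoe]
    calc |GG s a b t.1 - GG s a b u.1| ≤ (1 + s) / 2 * ((1 + s) / 2 * |t.1 - u.1|) := hgl
      _ = (1 + s) / 2 * ((1 + s) / 2) * |t.1 - u.1| := by ring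
  have hcontr : ContractingWith K Ghat := ⟨hK1, hlip⟩
  set tstar := ContractingWith.fixedPoint Ghat hcontr with htstar
  have hfix : Ghat tstar = tstar := hcontr.fixedPoint_isFixedPt
  set p := Real.exp (tstar.1) with hp
  obtain ⟨htm1, htm2⟩ := tstar.2
  have htmem : Real.log (mm s a b) ≤ tstar.1 ∧ tstar.1 ≤ -(a * ww s b₀) := ⟨htm1, htm2⟩
  have hpmem1 : mm s a b ≤ p := by
    rw [hp, ← Real.exp_log h.m_pos]
    exact Real.exp_le_exp.2 htmem.1
  have hpmem2 : p ≤ Real.exp (-(a * ww s b₀)) := Real.exp_le_exp.2 htmem.2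
  have hGt : GG s a b tstar.1 = tstar.1 := congrArg Subtype.val hfix
  have hFFp : F s a b (F s a b p) = p := by
    have h3 := (h.G_maps htmem.1 htmem.2).2.2
    rw [hGt] at h3
    rw [hp]
    exact h3.symm
  have hp2 : p ≤ Real.exp (-(2 * (a * ww s b₀))) := by
    have h4 := (h.G_maps htmem.1 htmem.2).2.1
    rw [hGt] at h4
    exact Real.exp_le_exp.2 h4
  have hplow : mm s a b < p := by
    have hpI : p ∈ Ioo (0:ℝ) 1 := by
      constructor
      · exact Real.exp_pos _
      · have := h.W_lt_half; linarith
    have hFp := h.deepL_maps hpmem1 hpmem2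
    have hq1 : 1 - cc s a < F s a b p := by
      have h2 : Real.exp (-(2 * (a * ww s b₀))) ≤ Real.exp (-(a * ww s b₀)) := by
        apply Real.exp_le_exp.2; linarith
      have := h.W_lt_c
      linarith [hFp.1]
    have hq2 : F s a b p < 1 := F_lt_one hpI
    have hcc := cc_pos h.hs h.hs1 h.ha8
    have hmono := strictMonoOn_right (b := b) h.hs h.hs1 h.ha8
      (Set.mem_Ico.2 ⟨le_refl (1 - cc s a), by linarith⟩)
      (Set.mem_Ico.2 ⟨hq1.le, hq2⟩) hq1
    rw [hFFp] at hmono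
    exact hmono
  have hconv : ∀ z, mm s a b ≤ z → z ≤ Real.exp (-(a * ww s b₀)) →
      Tendsto (fun n => (fun y => F s a b (F s a b y))^[n] z) atTop (nhds p) := by
    intro z hz1 hz2
    have hz0 : 0 < z := lt_of_lt_of_le h.m_pos hz1
    have htz : Real.log z ∈ T := by
      rw [hT, mem_Icc]
      refine ⟨Real.log_le_log h.m_pos hz1, ?_⟩
      calc Real.log z ≤ Real.log (Real.exp (-(a * ww s b₀))) := Real.log_le_log hz0 hz2
        _ = -(a * ww s b₀) := Real.log_exp _
    set z0 : T := ⟨Real.log z, htz⟩ with hz0def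
    have hrep : ∀ n : ℕ, (fun y => F s a b (F s a b y))^[n] z = Real.exp ((Ghat^[n] z0).1) := by
      intro n
      induction n with
      | zero => simp [hz0def, Real.exp_log hz0]
      | succ n ih =>
        rw [Function.iterate_succ_apply', Function.iterate_succ_apply' (f := Ghat)]
        obtain ⟨hm1, hm2⟩ := (Ghat^[n] z0).2
        have h3 := (h.G_maps hm1 hm2).2.2
        rw [ih]
        exact h3.symm
    have hconv0 := hcontr.tendsto_iterate_fixedPoint z0
    have h1 : Tendsto (fun n => (Ghat^[n] z0).1) atTop (nhds tstar.1) :=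
      (continuous_subtype_val.tendsto tstar).comp hconv0
    have h2 : Tendsto (fun n => Real.exp ((Ghat^[n] z0).1)) atTop (nhds p) := by
      rw [hp]
      exact (Real.continuous_exp.tendsto tstar.1).comp h1
    exact Tendsto.congr (fun n => (hrep n).symm) h2
  exact ⟨p, ⟨hplow, hp2⟩, hFFp, hconv⟩

end EWAProof

open EWAProof in
/-- For large intensity of choice `a` and `b ∈ [b₀, 1-b₀]`, the map `f_{a,b,σ}` has an
attracting period-2 orbit attracting all of `(0,1)` except the countably many points
whose trajectory falls into the unique fixed point. -/
theorem attracting_period_two_orbit (σ b₀ : ℝ) (hσ : σ ∈ Set.Ico (0:ℝ) 1)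
    (hb₀ : b₀ ∈ Set.Ioo ((1 - σ) / (2 - σ)) (1/2)) :
    ∃ a₁ > (0:ℝ), ∀ a ≥ a₁, ∀ b ∈ Set.Icc b₀ (1 - b₀),
      ∃ p q xbar : ℝ,
        p ∈ Set.Ioo (0:ℝ) 1 ∧ q ∈ Set.Ioo (0:ℝ) 1 ∧ p ≠ q ∧
        f a b σ p = q ∧ f a b σ q = p ∧
        IsAttractingFixedPt (fun x => f a b σ (f a b σ x)) p ∧
        xbar ∈ Set.Ioo (0:ℝ) 1 ∧ f a b σ xbar = xbar ∧
        {x | x ∈ Set.Ioo (0:ℝ) 1 ∧ ∃ n : ℕ, (f a b σ)^[n] x = xbar}.Countable ∧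
        ∀ x ∈ Set.Ioo (0:ℝ) 1,
          Filter.Tendsto (fun n => (f a b σ)^[2*n] x) Filter.atTop (nhds p) ∨
          Filter.Tendsto (fun n => (f a b σ)^[2*n] x) Filter.atTop (nhds q) ∨
          ∃ n : ℕ, (f a b σ)^[n] x = xbar := by
  classical
  obtain ⟨hσ0, hσ1⟩ := hσ
  obtain ⟨hb₀l, hb₀r⟩ := hb₀
  have hs : 0 < 1 - σ := by linarith
  have h2σ : (0:ℝ) < 2 - σ := by linarith
  have hdiv : 1 - σ < b₀ * (2 - σ) := (div_lt_iff₀ h2σ).1 hb₀l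
  have hs1 : 1 - σ < 1 := by nlinarith
  have hρ : 0 < b₀ * (1 + (1 - σ)) - (1 - σ) := by nlinarith
  obtain ⟨a₁, ha₁, hsetup⟩ := setup_eventually hs hs1 hρ hb₀r
  refine ⟨a₁, ha₁, ?_⟩
  intro a haa b hb
  have h : Setup (1 - σ) b₀ a b := hsetup a haa b hb.1 hb.2
  have hfF : f a b σ = F (1 - σ) a b := rfl
  have haw : 0 < a * ww (1 - σ) b₀ := mul_pos h.ha0 h.hw_pos
  obtain ⟨p, ⟨hpl, hpu⟩, hFFp, hconvDL⟩ := main_cycle h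
  have hW2W : Real.exp (-(2 * (a * ww (1 - σ) b₀))) ≤ Real.exp (-(a * ww (1 - σ) b₀)) := by
    apply Real.exp_le_exp.2; linarith
  have hW2W' : Real.exp (-(2 * (a * ww (1 - σ) b₀))) < Real.exp (-(a * ww (1 - σ) b₀)) := by
    apply Real.exp_lt_exp.2; linarith
  have hpW : p ≤ Real.exp (-(a * ww (1 - σ) b₀)) := hpu.trans hW2W
  have hpI : p ∈ Set.Ioo (0:ℝ) 1 := by
    constructor
    · exact lt_trans h.m_pos hpl
    · have := h.W_lt_half; linarith
  set q := F (1 - σ) a b p with hq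
  have hqI : q ∈ Set.Ioo (0:ℝ) 1 := F_mem hpI
  have hdeep := h.deepL_maps hpl.le hpW
  have hqDR : 1 - Real.exp (-(2 * (a * ww (1 - σ) b₀))) ≤ q := by
    have := hdeep.1; rw [← hq] at this; linarith
  have hqDR' : q ≤ MM (1 - σ) a b := by
    have := hdeep.2; rw [← hq] at this; exact this
  have hW2b := h.W2_small
  have hWb := h.W_le_b₀
  have hb₀0 := h.hb₀0
  have hb₀2 := h.hb₀2
  have hpq : p ≠ q := by
    intro hcon
    have h1 : p ≤ b₀ / 4 := hpW.trans hWb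
    have h2 : 1 - b₀ / 4 ≤ q := by linarith
    linarith [hcon ▸ h1]
  obtain ⟨xb, hxbN, hxbfix⟩ := h.xbar_exists
  have hxbI : xb ∈ Set.Ioo (0:ℝ) 1 := h.N_subI ⟨hxbN.1.le, hxbN.2.le⟩
  -- convergence on the deep right region
  have hconvDR : ∀ z, 1 - Real.exp (-(a * ww (1 - σ) b₀)) ≤ z → z ≤ MM (1 - σ) a b →
      Tendsto (fun n => (fun y => F (1 - σ) a b (F (1 - σ) a b y))^[n] z) atTop (nhds q) := by
    intro z hz1 hz2
    have hz1' : b + b₀ / 2 ≤ z := by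
      have := h.hbr; linarith
    have hFz := h.right_maps hz1' hz2
    have hbase := hconvDL (F (1 - σ) a b z) hFz.1 (hFz.2.trans hW2W)
    have hcontF : ContinuousAt (F (1 - σ) a b) p := (hasDerivAt_F hpI).continuousAt
    have h2 : Tendsto (fun n => F (1 - σ) a b
        ((fun y => F (1 - σ) a b (F (1 - σ) a b y))^[n] (F (1 - σ) a b z))) atTop (nhds q) := by
      rw [hq]
      exact hcontF.tendsto.comp hbase
    have h3 : ∀ n : ℕ, F (1 - σ) a b
        ((fun y => F (1 - σ) a b (F (1 - σ) a b y))^[n] (F (1 - σ) a b z))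
        = (fun y => F (1 - σ) a b (F (1 - σ) a b y))^[n + 1] z := by
      intro n
      exact comp_iterate_shift (F (1 - σ) a b) n z
    have h4 := Tendsto.congr h3 h2
    exact (tendsto_add_atTop_iff_nat 1).1 h4
  -- attraction
  have hattract : IsAttractingFixedPt (fun x => f a b σ (f a b σ x)) p := by
    constructor
    · show f a b σ (f a b σ p) = p
      rw [hfF]; exact hFFp
    · refine ⟨Set.Ioo (mm (1 - σ) a b) (Real.exp (-(a * ww (1 - σ) b₀))), isOpen_Ioo,
        ⟨hpl, lt_of_le_of_lt hpu hW2W'⟩, ?_⟩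
      intro y hy
      have := hconvDL y hy.1.le hy.2.le
      show Tendsto (fun n => (fun x => f a b σ (f a b σ x))^[n] y) atTop (nhds p)
      rw [hfF]
      exact this
  -- trichotomy
  have htri : ∀ x ∈ Set.Ioo (0:ℝ) 1,
      Tendsto (fun n => (F (1 - σ) a b)^[2*n] x) atTop (nhds p) ∨
      Tendsto (fun n => (F (1 - σ) a b)^[2*n] x) atTop (nhds q) ∨
      ∃ n : ℕ, (F (1 - σ) a b)^[n] x = xb := by
    intro x hx
    set g := F (1 - σ) a b with hg
    have hit2 : ∀ (J n : ℕ), g^[2*n + J] x = (fun y => g (g y))^[n] (g^[J] x) := by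
      intro J n
      rw [Function.iterate_add_apply]
      have hgg : g^[2] = fun y => g (g y) := by
        funext y
        simp [Function.iterate_succ_apply']
      rw [Function.iterate_mul, hgg]
    have claimDL : ∀ J : ℕ, Even J →
        g^[J] x ∈ Set.Icc (mm (1 - σ) a b) (Real.exp (-(a * ww (1 - σ) b₀))) →
        Tendsto (fun n => g^[2*n] x) atTop (nhds p) := by
      intro J hJ hmem
      obtain ⟨j, hj⟩ := hJ
      have hbase := hconvDL (g^[J] x) hmem.1 hmem.2
      have hcomp := hbase.comp (tendsto_sub_atTop_nat j)
      apply Tendsto.congr' ?_ hcomp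
      filter_upwards [eventually_ge_atTop j] with n hn
      have h2n : 2*(n - j) + J = 2*n := by omega
      show (fun y => g (g y))^[n - j] (g^[J] x) = g^[2*n] x
      rw [← hit2 J (n - j), h2n]
    have claimDR : ∀ J : ℕ, Even J →
        g^[J] x ∈ Set.Icc (1 - Real.exp (-(a * ww (1 - σ) b₀))) (MM (1 - σ) a b) →
        Tendsto (fun n => g^[2*n] x) atTop (nhds q) := by
      intro J hJ hmem
      obtain ⟨j, hj⟩ := hJ
      have hbase := hconvDR (g^[J] x) hmem.1 hmem.2
      have hcomp := hbase.comp (tendsto_sub_atTop_nat j)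
      apply Tendsto.congr' ?_ hcomp
      filter_upwards [eventually_ge_atTop j] with n hn
      have h2n : 2*(n - j) + J = 2*n := by omega
      show (fun y => g (g y))^[n - j] (g^[J] x) = g^[2*n] x
      rw [← hit2 J (n - j), h2n]
    have hstep1 : ∃ n₀, g^[n₀] x ∈ Set.Icc (mm (1 - σ) a b) (MM (1 - σ) a b) := by
      rcases lt_or_ge x (mm (1 - σ) a b) with hlow | hge
      · exact h.enter_from_below hx hlow
      · rcases le_or_gt x (MM (1 - σ) a b) with hle | hgt
        · exact ⟨0, hge, hle⟩
        · have h' := h.symm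
          have hx' : 1 - x ∈ Set.Ioo (0:ℝ) 1 := ⟨by linarith [hx.2], by linarith [hx.1]⟩
          have hM' : mm (1 - σ) a (1 - b) = 1 - MM (1 - σ) a b := by
            have := h.M_eq; linarith
          have hlow' : 1 - x < mm (1 - σ) a (1 - b) := by rw [hM']; linarith
          obtain ⟨n, hn⟩ := h'.enter_from_below hx' hlow'
          refine ⟨n, ?_⟩
          have hsymm := iterate_symm (s := 1 - σ) (a := a) (b := b) n x hx
          have hMM' : MM (1 - σ) a (1 - b) = 1 - mm (1 - σ) a b := by
            have h5 := h'.M_eq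
            rw [sub_sub_cancel] at h5
            linarith
          rw [hsymm]
          constructor
          · have := hn.2; rw [hMM'] at this; linarith
          · have := hn.1; rw [hM'] at this; linarith
    obtain ⟨n₀, hn₀⟩ := hstep1
    set z := g^[n₀] x with hzdef
    have hziter : ∀ k, g^[k] z ∈ Set.Icc (mm (1 - σ) a b) (MM (1 - σ) a b) :=
      h.stay_in_lam hn₀
    by_cases hall : ∀ k, g^[k] z ∈ Set.Icc (b - b₀ / 2) (b + b₀ / 2)
    · right; right
      refine ⟨n₀, ?_⟩
      show z = xb
      by_contra hne
      have hgrow : ∀ k, 2^k * |z - xb| ≤ |g^[k] z - xb| := by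
        intro k
        induction k with
        | zero => simp
        | succ k ih =>
          have hFU : g (g^[k] z) ∈ Set.Icc (b - b₀ / 2) (b + b₀ / 2) := by
            have h6 := hall (k+1)
            rwa [Function.iterate_succ_apply'] at h6
          have hexp := h.expansion (hall k) ⟨hxbN.1.le, hxbN.2.le⟩ hxbfix hFU
          calc 2^(k+1) * |z - xb| = 2 * (2^k * |z - xb|) := by ring
            _ ≤ 2 * |g^[k] z - xb| := by linarith
            _ ≤ |g (g^[k] z) - xb| := hexp
            _ = |g^[k+1] z - xb| := by rw [Function.iterate_succ_apply']
      have hzne : 0 < |z - xb| := abs_pos.2 (sub_ne_zero.2 hne)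
      obtain ⟨k, hk⟩ := pow_unbounded_of_one_lt (R := ℝ) (b₀ / |z - xb|) one_lt_two
      rw [div_lt_iff₀ hzne] at hk
      have hb1 := (hall k).1
      have hb2 := (hall k).2
      have hbnd : |g^[k] z - xb| ≤ b₀ := by
        rw [abs_le]
        constructor
        · linarith [hxbN.2]
        · linarith [hxbN.1]
      linarith [hgrow k]
    · push_neg at hall
      obtain ⟨k, hk⟩ := hall
      have hw := hziter k
      have hcases : g^[k+1] z ∈ Set.Icc (mm (1 - σ) a b) (Real.exp (-(a * ww (1 - σ) b₀))) ∨
          g^[k+1] z ∈ Set.Icc (1 - Real.exp (-(a * ww (1 - σ) b₀))) (MM (1 - σ) a b) := by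
        rcases lt_or_ge (g^[k] z) (b - b₀ / 2) with hlt | hge2
        · right
          have h7 := h.left_maps hw.1 hlt.le
          rw [Function.iterate_succ_apply']
          refine ⟨?_, h7.2⟩
          linarith [h7.1, hW2W]
        · left
          have hge3 : b + b₀ / 2 ≤ g^[k] z := by
            by_contra hcon
            push_neg at hcon
            exact hk ⟨hge2, hcon.le⟩
          have h7 := h.right_maps hge3 hw.2
          rw [Function.iterate_succ_apply']
          exact ⟨h7.1, h7.2.trans hW2W⟩
      have hJeq : ∀ j : ℕ, g^[j] z = g^[j + n₀] x := by
        intro j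
        rw [hzdef, ← Function.iterate_add_apply]
      rcases hcases with hDL | hDR
      · rcases Nat.even_or_odd (k+1+n₀) with hev | hodd
        · left
          apply claimDL (k+1+n₀) hev
          rw [← hJeq]
          exact hDL
        · right; left
          apply claimDR (k+1+n₀+1) hodd.add_one
          have hnext := h.deepL_maps hDL.1 hDL.2
          have heq8 : g^[k+1+n₀+1] x = g (g^[k+1] z) := by
            rw [Function.iterate_succ_apply', ← hJeq]
          rw [heq8]
          exact ⟨by linarith [hnext.1, hW2W], hnext.2⟩
      · rcases Nat.even_or_odd (k+1+n₀) with hev | hodd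
        · right; left
          apply claimDR (k+1+n₀) hev
          rw [← hJeq]
          exact hDR
        · left
          apply claimDL (k+1+n₀+1) hodd.add_one
          have hz1' : b + b₀ / 2 ≤ g^[k+1] z := by
            have := h.hbr; linarith [hDR.1]
          have hnext := h.right_maps hz1' hDR.2
          have heq8 : g^[k+1+n₀+1] x = g (g^[k+1] z) := by
            rw [Function.iterate_succ_apply', ← hJeq]
          rw [heq8]
          exact ⟨hnext.1, hnext.2.trans hW2W⟩
  refine ⟨p, q, xb, hpI, hqI, hpq, ?_, ?_, hattract, hxbI, ?_, ?_, ?_⟩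
  · show f a b σ p = q
    rw [hfF, hq]
  · show f a b σ q = p
    rw [hfF, hq]
    exact hFFp
  · show f a b σ xb = xb
    rw [hfF]
    exact hxbfix
  · show {x | x ∈ Set.Ioo (0:ℝ) 1 ∧ ∃ n : ℕ, (f a b σ)^[n] x = xb}.Countable
    rw [hfF]
    exact h.preimages_countable xb
  · intro x hx
    have := htri x hx
    rw [hfF]
    exact this
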